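/- arXiv:2203.14837 — 7 statements merged into one kernel-verified Lean document; each statement's English description precedes it below -/
import Mathlib

section
/- Let X be an infinite lower Hessenberg matrix. For every ℓ ≥ 1 and M ≥ 0 there exist constants c(M,ℓ) ≥ 1 and R(M,ℓ) ≥ M, independent of X, such that sup over pairs (i,j) with |i−j| ≤ M of |[X^ℓ]_{i,j}| is at most c(M,ℓ) · (sup over pairs (i,j) with |i−j| ≤ R(M,ℓ) of |X_{i,j}|)^ℓ. In particular, if sup_{|i−j| ≤ R} |X_{i,j}| < ∞ for every R ≥ 0, then the same holds for every power X^ℓ. -/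
/-- Entrywise powers of an infinite matrix indexed by `ℕ`. -/
noncomputable def matPow (X : ℕ → ℕ → ℝ) : ℕ → ℕ → ℕ → ℝ
  | 0 => fun i j => if i = j then (1 : ℝ) else 0
  | (l + 1) => fun i j => ∑' k, matPow X l i k * X k j

/-- Membership of an index pair in the diagonal neighbourhood `D_R`. -/
def inDiagNbhd (R i j : ℕ) : Prop := i ≤ j + R ∧ j ≤ i + R

lemma matPow_eq_zero_of_lt (X : ℕ → ℕ → ℝ) (hX : ∀ i j : ℕ, i + 1 < j → X i j = 0) :
    ∀ ℓ i k : ℕ, i + ℓ < k → matPow X ℓ i k = 0 := by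
  intro ℓ
  induction ℓ with
  | zero =>
    intro i k h
    simp only [matPow]
    have : i ≠ k := by omega
    simp [this]
  | succ l ih =>
    intro i k h
    simp only [matPow]
    have hterm : ∀ m : ℕ, matPow X l i m * X m k = 0 := by
      intro m
      by_cases hm : i + l < m
      · rw [ih i m hm]; ring
      · rw [hX m k (by omega)]; ring
    simp [hterm]

lemma matPow_one (X : ℕ → ℕ → ℝ) (i j : ℕ) : matPow X 1 i j = X i j := by
  simp only [matPow]
  rw [tsum_eq_single i]
  · simp
  · intro k hk
    simp [Ne.symm hk]

lemma matPow_succ_eq (X : ℕ → ℕ → ℝ) (hX : ∀ i j : ℕ, i + 1 < j → X i j = 0)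
    (l i j : ℕ) :
    matPow X (l + 1) i j = ∑ k ∈ Finset.Icc (j - 1) (i + l), matPow X l i k * X k j := by
  simp only [matPow]
  apply tsum_eq_sum
  intro k hk
  simp only [Finset.mem_Icc, not_and_or, not_le] at hk
  rcases hk with hk | hk
  · rw [hX k j (by omega)]; ring
  · rw [matPow_eq_zero_of_lt X hX l i k hk]; ring

lemma hessenberg_helper (ℓ : ℕ) (hℓ : 1 ≤ ℓ) : ∀ M : ℕ, ∃ c : ℝ, 1 ≤ c ∧ ∃ R : ℕ, M ≤ R ∧
    ∀ X : ℕ → ℕ → ℝ, (∀ i j : ℕ, i + 1 < j → X i j = 0) →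
      ∀ S : ℝ, (∀ i j : ℕ, inDiagNbhd R i j → |X i j| ≤ S) →
        ∀ i j : ℕ, inDiagNbhd M i j → |matPow X ℓ i j| ≤ c * S ^ ℓ := by
  induction ℓ with
  | zero => omega
  | succ l ih =>
    rcases Nat.eq_zero_or_pos l with rfl | hl
    · intro M
      refine ⟨1, le_refl 1, M, le_refl M, fun X hX S hS i j hij => ?_⟩
      rw [matPow_one]
      simpa using hS i j hij
    · intro M
      obtain ⟨c₁, hc₁, R₁, hR₁, H⟩ := ih hl (M + l + 1)
      refine ⟨c₁ * ((M : ℝ) + l + 2), ?_, R₁, by omega, ?_⟩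
      · have hM : (0 : ℝ) ≤ (M : ℝ) := Nat.cast_nonneg M
        have hL : (0 : ℝ) ≤ (l : ℝ) := Nat.cast_nonneg l
        nlinarith
      intro X hX S hS i j hij
      obtain ⟨hij1, hij2⟩ := hij
      have hS0 : 0 ≤ S := le_trans (abs_nonneg _) (hS 0 0 ⟨by omega, by omega⟩)
      have hSl : (0 : ℝ) ≤ S ^ l := pow_nonneg hS0 l
      have hc₁0 : (0 : ℝ) ≤ c₁ := le_trans zero_le_one hc₁
      rw [matPow_succ_eq X hX l i j]
      have hterm : ∀ k ∈ Finset.Icc (j - 1) (i + l),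
          |matPow X l i k * X k j| ≤ c₁ * S ^ l * S := by
        intro k hk
        rw [Finset.mem_Icc] at hk
        obtain ⟨hk1, hk2⟩ := hk
        have h1 : |matPow X l i k| ≤ c₁ * S ^ l := by
          apply H X hX S hS i k
          constructor <;> omega
        have h2 : |X k j| ≤ S := by
          apply hS k j
          constructor <;> omega
        rw [abs_mul]
        exact mul_le_mul h1 h2 (abs_nonneg _) (by positivity)
      calc |∑ k ∈ Finset.Icc (j - 1) (i + l), matPow X l i k * X k j|
          ≤ ∑ k ∈ Finset.Icc (j - 1) (i + l), |matPow X l i k * X k j| :=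
            Finset.abs_sum_le_sum_abs _ _
        _ ≤ (Finset.Icc (j - 1) (i + l)).card • (c₁ * S ^ l * S) :=
            Finset.sum_le_card_nsmul _ _ _ hterm
        _ = ((Finset.Icc (j - 1) (i + l)).card : ℝ) * (c₁ * S ^ l * S) := by
            rw [nsmul_eq_mul]
        _ ≤ ((M : ℝ) + l + 2) * (c₁ * S ^ l * S) := by
            apply mul_le_mul_of_nonneg_right _ (by positivity)
            rw [Nat.card_Icc]
            have hcard : (i + l + 1 - (j - 1)) ≤ M + l + 2 := by omega
            calc ((i + l + 1 - (j - 1) : ℕ) : ℝ) ≤ ((M + l + 2 : ℕ) : ℝ) := by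
                  exact_mod_cast hcard
              _ = (M : ℝ) + l + 2 := by push_cast; ring
        _ = c₁ * ((M : ℝ) + l + 2) * S ^ (l + 1) := by rw [pow_succ]; ring

/-- For every `ℓ ≥ 1` and `M ≥ 0` there exist constants `c(M,ℓ) ≥ 1` and `R(M,ℓ) ≥ M`,
independent of the lower Hessenberg matrix `X`, such that the entries of `X^ℓ` on `D_M`
are bounded by `c(M,ℓ)` times the `ℓ`-th power of a bound for `|X|` on `D_{R(M,ℓ)}`.
In particular, near-diagonal boundedness of `X` passes to every power of `X`. -/
theorem hessenberg_pow_near_diagonal_bound (ℓ M : ℕ) (hℓ : 1 ≤ ℓ) :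
    (∃ c : ℝ, 1 ≤ c ∧ ∃ R : ℕ, M ≤ R ∧
      ∀ X : ℕ → ℕ → ℝ, (∀ i j : ℕ, i + 1 < j → X i j = 0) →
        ∀ S : ℝ, (∀ i j : ℕ, inDiagNbhd R i j → |X i j| ≤ S) →
          ∀ i j : ℕ, inDiagNbhd M i j → |matPow X ℓ i j| ≤ c * S ^ ℓ) ∧
    (∀ X : ℕ → ℕ → ℝ, (∀ i j : ℕ, i + 1 < j → X i j = 0) →
      (∀ R : ℕ, ∃ C : ℝ, ∀ i j : ℕ, inDiagNbhd R i j → |X i j| ≤ C) →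
      ∀ R : ℕ, ∃ C : ℝ, ∀ i j : ℕ, inDiagNbhd R i j → |matPow X ℓ i j| ≤ C) := by
  constructor
  · exact hessenberg_helper ℓ hℓ M
  · intro X hX hbd R
    obtain ⟨c, hc, R', hR', H⟩ := hessenberg_helper ℓ hℓ R
    obtain ⟨C, hC⟩ := hbd R'
    exact ⟨c * C ^ ℓ, fun i j hij => H X hX C hC i j hij⟩
end

section
/- Let (p_n)_{n≥0} be monic real polynomials, deg p_n = n, all of whose zeros lie in a fixed compact interval Δ ⊂ ℝ, with the zeros of p_n and p_{n+1} simple and interlacing for every n. Then for every compact set K ⊂ ℂ \ Δ, sup_{n ≥ 0} sup_{z ∈ K} |p_{n+1}(z)|/|p_n(z)| < ∞. -/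
/-!
For real `t`, `‖z - t‖` increases with `|Re z - t|`. By interlacing, each inner zero of `p (n+1)`
can be matched injectively with its neighbouring zero of `p n` lying farther from `Re z`, which is
farther from `z` as well; exactly one zero `y` of `p n` stays unmatched (`Fin.succAbove`). Hence
`|p (n+1) z / p n z| ≤ |z - x₁| |z - x_{n+1}| / |z - y| ≤ R² / d`, where `d` and `R` bound the
distance between `K` and `Δ` from below and above.
-/

open Polynomial

theorem Complex.norm_sub_ofReal_le_of_abs_re_sub_le (z : ℂ) {s t : ℝ}
    (h : |z.re - s| ≤ |z.re - t|) : ‖z - s‖ ≤ ‖z - t‖ := by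
  simp only [Complex.norm_eq_sqrt_sq_add_sq, Complex.sub_re, Complex.ofReal_re,
    Complex.sub_im, Complex.ofReal_im, sub_zero]
  exact Real.sqrt_le_sqrt (add_le_add_left (sq_le_sq.mpr h) _)

theorem norm_aeval_prod_X_sub_C {ι : Type*} [Fintype ι] (x : ι → ℝ) (z : ℂ) :
    ‖aeval z (∏ k, (X - C (x k)))‖ = ∏ k, ‖z - x k‖ := by
  simp [norm_prod]

theorem Fin.exists_abs_sub_le_abs_sub_succAbove {N : ℕ} (u : Fin N → ℝ) (v : Fin (N + 1) → ℝ)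
    (hu : Monotone u) (huv : ∀ k, v k.castSucc ≤ u k ∧ u k ≤ v k.succ) (r : ℝ) :
    ∃ m : Fin (N + 1), ∀ k, |r - u k| ≤ |r - v (m.succAbove k)| := by
  classical
  by_cases h : ∃ k, r < u k
  · refine ⟨(Fin.find _ h).castSucc, fun k => ?_⟩
    rcases lt_or_ge k (Fin.find _ h) with hk | hk
    · have hur : u k ≤ r := not_lt.mp (Fin.find_min h hk)
      rw [Fin.succAbove_of_castSucc_lt _ _ (Fin.castSucc_lt_castSucc_iff.mpr hk)]
      exact abs_le_abs_of_nonneg (by linarith) (by linarith [(huv k).1])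
    · have hru : r < u k := (Fin.find_spec h).trans_le (hu hk)
      rw [Fin.succAbove_of_le_castSucc _ _ (Fin.castSucc_le_castSucc_iff.mpr hk)]
      exact abs_le_abs_of_nonpos (by linarith) (by linarith [(huv k).2])
  · simp only [not_exists, not_lt] at h
    refine ⟨Fin.last N, fun k => ?_⟩
    rw [Fin.succAbove_last]
    exact abs_le_abs_of_nonneg (by linarith [h k]) (by linarith [(huv k).1])

theorem prod_norm_sub_mul_le_of_interlace {N : ℕ} (X : Fin (N + 2) → ℝ) (Y : Fin (N + 1) → ℝ)
    (hX : Monotone X) (hXY : ∀ k, X k.castSucc ≤ Y k ∧ Y k ≤ X k.succ) (z : ℂ) :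
    ∃ m, (∏ k, ‖z - X k‖) * ‖z - Y m‖ ≤ ‖z - X 0‖ * ‖z - X (Fin.last _)‖ * ∏ k, ‖z - Y k‖ := by
  obtain ⟨m, hm⟩ := Fin.exists_abs_sub_le_abs_sub_succAbove (fun k => X k.castSucc.succ) Y
    (hX.comp (Fin.strictMono_succ.monotone.comp Fin.strictMono_castSucc.monotone))
    (fun k => ⟨(hXY k.castSucc).2, Fin.succ_castSucc k ▸ (hXY k.succ).1⟩) z.re
  have hinner : ∏ k : Fin N, ‖z - X k.castSucc.succ‖ ≤ ∏ k, ‖z - Y (m.succAbove k)‖ :=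
    Finset.prod_le_prod (fun _ _ => norm_nonneg _) fun k _ =>
      z.norm_sub_ofReal_le_of_abs_re_sub_le (hm k)
  refine ⟨m, ?_⟩
  rw [Fin.prod_univ_succ, Fin.prod_univ_castSucc, Fin.succ_last, Fin.prod_univ_succAbove _ m]
  calc ‖z - X 0‖ * ((∏ k : Fin N, ‖z - X k.castSucc.succ‖) * ‖z - X (Fin.last _)‖) * ‖z - Y m‖
      = ‖z - X 0‖ * ‖z - X (Fin.last _)‖ * (‖z - Y m‖ * ∏ k : Fin N, ‖z - X k.castSucc.succ‖) := by
        ring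
    _ ≤ ‖z - X 0‖ * ‖z - X (Fin.last _)‖ * (‖z - Y m‖ * ∏ k, ‖z - Y (m.succAbove k)‖) := by
        gcongr

theorem IsCompact.exists_pos_forall_le_norm_sub {E : Type*} [SeminormedAddCommGroup E]
    {K T : Set E} (hK : IsCompact K) (hT : IsClosed T) (hKT : Disjoint K T) :
    ∃ d : ℝ, 0 < d ∧ ∀ z ∈ K, ∀ t ∈ T, d ≤ ‖z - t‖ := by
  obtain ⟨r, hr, hr_lt⟩ := Metric.exists_pos_forall_lt_edist hK hT hKT
  refine ⟨r, hr, fun z hz t ht => ?_⟩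
  have := hr_lt z hz t ht
  rw [edist_nndist, ENNReal.coe_lt_coe, ← NNReal.coe_lt_coe, coe_nndist, dist_eq_norm] at this
  exact this.le

theorem ratio_consecutive_uniformly_bounded_general (a b : ℝ)
    (p : ℕ → Polynomial ℝ) (x : (n : ℕ) → Fin n → ℝ)
    (hx : ∀ n, StrictMono (x n))
    (hxΔ : ∀ n, ∀ k : Fin n, x n k ∈ Set.Icc a b)
    (hp : ∀ n, p n = ∏ k : Fin n, (X - C (x n k)))
    (hinter : ∀ n, ∀ k : Fin n, x (n + 1) k.castSucc < x n k ∧ x n k < x (n + 1) k.succ)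
    (K : Set ℂ) (hK : IsCompact K)
    (hKΔ : Disjoint K ((fun t : ℝ => (t : ℂ)) '' Set.Icc a b)) :
    ∃ M : ℝ, ∀ n : ℕ, ∀ z ∈ K,
      ‖(Polynomial.aeval z) (p (n + 1))‖ / ‖(Polynomial.aeval z) (p n)‖ ≤ M := by
  obtain ⟨d, hd, hd_le⟩ := hK.exists_pos_forall_le_norm_sub
    (isCompact_Icc.image Complex.continuous_ofReal).isClosed hKΔ
  obtain ⟨R, hR⟩ := (hK.prod isCompact_Icc).exists_bound_of_continuousOn
    (f := fun q : ℂ × ℝ => q.1 - q.2) (by fun_prop)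
  have hle_R : ∀ z ∈ K, ∀ t ∈ Set.Icc a b, ‖z - t‖ ≤ R := fun z hz t ht => hR (z, t) ⟨hz, ht⟩
  refine ⟨max R (R * R / d), fun n z hz => ?_⟩
  simp only [hp, norm_aeval_prod_X_sub_C]
  cases n with
  | zero => simpa using le_max_of_le_left (hle_R z hz _ (hxΔ 1 0))
  | succ N =>
    obtain ⟨m, hm⟩ := prod_norm_sub_mul_le_of_interlace (x (N + 2)) (x (N + 1))
      (hx _).monotone (fun k => ⟨(hinter _ k).1.le, (hinter _ k).2.le⟩) z
    have hY_pos : ∀ k, 0 < ‖z - x (N + 1) k‖ := fun k =>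
      hd.trans_le (hd_le z hz _ ⟨_, hxΔ _ k, rfl⟩)
    have hR_nonneg : 0 ≤ R := (norm_nonneg _).trans (hle_R z hz _ (hxΔ 1 0))
    calc (∏ k, ‖z - x (N + 2) k‖) / ∏ k, ‖z - x (N + 1) k‖
        ≤ ‖z - x (N + 2) 0‖ * ‖z - x (N + 2) (Fin.last _)‖ / ‖z - x (N + 1) m‖ := by
          rwa [div_le_div_iff₀ (Finset.prod_pos fun k _ => hY_pos k) (hY_pos m)]
      _ ≤ R * R / d := by
          gcongr
          exacts [hle_R z hz _ (hxΔ _ _), hle_R z hz _ (hxΔ _ _), hd_le z hz _ ⟨_, hxΔ _ _, rfl⟩]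
      _ ≤ max R (R * R / d) := le_max_right _ _

/-- Let `(p n)` be monic real polynomials, `p n = ∏ (X - x n k)`, whose simple zeros all lie
in the compact interval `Δ = [a,b]` and interlace for consecutive degrees. Then on any compact
set `K ⊆ ℂ \ Δ`, the ratios `|p_{n+1}(z)| / |p_n(z)|` are uniformly bounded in `n` and `z ∈ K`. -/
theorem ratio_consecutive_uniformly_bounded (a b : ℝ) (hab : a ≤ b)
    (p : ℕ → Polynomial ℝ) (x : (n : ℕ) → Fin n → ℝ)
    (hx : ∀ n, StrictMono (x n))
    (hxΔ : ∀ n, ∀ k : Fin n, x n k ∈ Set.Icc a b)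
    (hp : ∀ n, p n = ∏ k : Fin n, (X - C (x n k)))
    (hinter : ∀ n, ∀ k : Fin n, x (n + 1) k.castSucc < x n k ∧ x n k < x (n + 1) k.succ)
    (K : Set ℂ) (hK : IsCompact K)
    (hKΔ : Disjoint K ((fun t : ℝ => (t : ℂ)) '' Set.Icc a b)) :
    ∃ M : ℝ, ∀ n : ℕ, ∀ z ∈ K,
      ‖(Polynomial.aeval z) (p (n + 1))‖ / ‖(Polynomial.aeval z) (p n)‖ ≤ M :=
  ratio_consecutive_uniformly_bounded_general a b p x hx hxΔ hp hinter K hK hKΔ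
end

section
/- Let (p_n)_{n≥0} be monic real polynomials, deg p_n = n, satisfying the recurrence x p_n = p_{n+1} + Σ_{k=0}^n J_{n,k} p_k. Suppose there is a compact interval Δ ⊂ ℝ such that each p_n has exactly n simple zeros lying inside Δ, and the zeros of p_n and p_{n+1} interlace for every n. Then for every N ≥ 0, sup_{n ≥ N} |J_{n,n−N}| < ∞; i.e., the recurrence matrix J is bounded in every fixed neighbourhood of the diagonal. -/
/-!
Reversing the polynomials, `A_n(z) = z^n p_n(1/z) = ∏_k (1 - x_{n,k} z)`, turns the recurrence
into `A_n = A_{n+1} + ∑_k J_{n,k} z^{n+1-k} A_k`. Comparing the coefficients of `z^{N+1}` in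
`A_n / A_{n+1}` expresses `J_{n,n-N}` through the `J_{n,n-j}` with `j < N` and the first `N + 1`
coefficients of the ratios `A_{n-j} / A_{n+1}`. By interlacing, the partial fraction expansion
`A_n / A_{n+1} = ∑_j w_j / (1 - x_{n+1,j} z)` has weights `w_j ≥ 0`, and they sum to `1`; so the
`r`-th coefficient of `A_n / A_{n+1}` is a convex combination of the `x_{n+1,j}^r`, bounded by
`M^r` with `M = max |a| |b|`. Telescoping bounds the coefficients of `A_k / A_{k+s}` uniformly
in `k`, and induction on `N` concludes.
-/

open Polynomial Finset Lagrange

namespace Polynomial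

section CommSemiring

variable {R : Type*} [CommSemiring R]

theorem reflect_sum {ι : Type*} (s : Finset ι) (f : ι → R[X]) (N : ℕ) :
    reflect N (∑ i ∈ s, f i) = ∑ i ∈ s, reflect N (f i) := by
  ext m
  simp only [coeff_reflect, finsetSum_coeff]

theorem reflect_add_eq_mul_X_pow {f : R[X]} {N : ℕ} (hf : f.natDegree ≤ N) (m : ℕ) :
    reflect (N + m) f = reflect N f * X ^ m := by
  simpa [reflect_one] using reflect_mul f 1 hf (natDegree_one.trans_le (Nat.zero_le m))

theorem reflect_succ_X_mul {f : R[X]} {N : ℕ} (hf : f.natDegree ≤ N) :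
    reflect (N + 1) (X * f) = reflect N f := by
  rw [add_comm, reflect_mul X f natDegree_X_le hf, reflect_one_X, one_mul]

theorem constantCoeff_coe_reflect_of_monic {P : R[X]} (hP : P.Monic) {n : ℕ}
    (hn : P.natDegree = n) : PowerSeries.constantCoeff (reflect n P : PowerSeries R) = 1 := by
  subst hn
  rw [← PowerSeries.coeff_zero_eq_constantCoeff_apply, coeff_coe, coeff_reflect,
    revAt_le (Nat.zero_le _), Nat.sub_zero, hP.coeff_natDegree]

theorem reflect_of_X_mul_eq_add_sum {p : ℕ → R[X]} {J : ℕ → ℕ → R}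
    (hdeg : ∀ k, (p k).natDegree ≤ k) {n : ℕ}
    (hrec : X * p n = p (n + 1) + ∑ k ∈ range (n + 1), C (J n k) * p k) :
    reflect n (p n) = reflect (n + 1) (p (n + 1)) +
      ∑ k ∈ range (n + 1), C (J n k) * reflect k (p k) * X ^ (n + 1 - k) := by
  rw [← reflect_succ_X_mul (hdeg n), hrec, reflect_add, reflect_sum]
  refine congrArg _ (sum_congr rfl fun k hk => ?_)
  rw [reflect_C_mul, mul_assoc, ← reflect_add_eq_mul_X_pow (hdeg k),
    Nat.add_sub_cancel' (mem_range.1 hk).le]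

end CommSemiring

theorem reflect_one_X_sub_C {R : Type*} [CommRing R] (a : R) :
    reflect 1 (X - C a) = 1 - C a * X := by
  rw [reflect_sub, reflect_one_X, reflect_C, pow_one]

end Polynomial

namespace Lagrange

variable {F ι : Type*} [Field F] [DecidableEq ι] {s : Finset ι} {v : ι → F}

theorem reflect_succ_nodal {n : ℕ} (hs : #s = n + 1) {i : ι} (hi : i ∈ s) :
    reflect (n + 1) (nodal s v) = (1 - C (v i) * X) * reflect n (nodal (s.erase i) v) := by
  have hdeg : (nodal (s.erase i) v).natDegree ≤ n := by
    rw [natDegree_nodal, card_erase_of_mem hi, hs, Nat.add_sub_cancel]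
  rw [nodal_eq_mul_nodal_erase hi, add_comm, reflect_mul _ _ (natDegree_X_sub_C_le _) hdeg,
    reflect_one_X_sub_C]

theorem eq_sum_nodalWeight_mul_nodal_erase (hvs : Set.InjOn v s) {P : F[X]}
    (hP : P.degree < #s) :
    P = ∑ i ∈ s, C (nodalWeight s v i * P.eval (v i)) * nodal (s.erase i) v := by
  conv_lhs => rw [eq_interpolate hvs hP, interpolate_eq_nodalWeight_mul_nodal_div_X_sub_C]
  refine sum_congr rfl fun i hi => ?_
  rw [← nodal_erase_eq_nodal_div hi, C_mul]
  ring

theorem coe_reflect_mul_inv_reflect_nodal (hvs : Set.InjOn v s) {n : ℕ} (hs : #s = n + 1)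
    {P : F[X]} (hP : P.natDegree ≤ n) :
    (reflect n P : PowerSeries F) * (reflect (n + 1) (nodal s v) : PowerSeries F)⁻¹ =
      ∑ i ∈ s, PowerSeries.C (nodalWeight s v i * P.eval (v i)) *
        (1 - PowerSeries.C (v i) * PowerSeries.X)⁻¹ := by
  have hQ : PowerSeries.constantCoeff (reflect (n + 1) (nodal s v) : PowerSeries F) ≠ 0 := by
    rw [constantCoeff_coe_reflect_of_monic nodal_monic (natDegree_nodal.trans hs)]
    exact one_ne_zero
  have hPs : P.degree < #s := by
    rw [hs]
    exact (degree_le_of_natDegree_le hP).trans_lt (by exact_mod_cast n.lt_succ_self)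
  have hrefl : reflect n P = ∑ i ∈ s, C (nodalWeight s v i * P.eval (v i)) *
      reflect n (nodal (s.erase i) v) := by
    conv_lhs => rw [eq_sum_nodalWeight_mul_nodal_erase hvs hPs]
    simp only [reflect_sum, reflect_C_mul]
  refine ((PowerSeries.eq_mul_inv_iff_mul_eq hQ).mpr ?_).symm
  rw [hrefl, sum_mul, ← coeToPowerSeries.ringHom_apply (φ := ∑ i ∈ s, _), map_sum]
  refine sum_congr rfl fun i hi => ?_
  rw [coeToPowerSeries.ringHom_apply, reflect_succ_nodal hs hi]
  push_cast
  rw [mul_assoc, ← mul_assoc _ (1 - _), PowerSeries.inv_mul_cancel _ (by simp), one_mul]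

end Lagrange

namespace PowerSeries

theorem coeff_inv_one_sub_C_mul_X {k : Type*} [Field k] (a : k) (n : ℕ) :
    coeff n (1 - C a * X)⁻¹ = a ^ n := by
  have h : (1 - C a * X)⁻¹ = rescale a (mk 1) := by
    rw [PowerSeries.inv_eq_iff_mul_eq_one (by simp), ← rescale_X, ← map_one (rescale a),
      ← map_sub, ← map_mul, mk_one_mul_one_sub_eq_one, map_one]
  rw [h, coeff_rescale, coeff_mk, Pi.one_apply, mul_one]

variable {A : ℕ → PowerSeries ℝ} {J : ℕ → ℕ → ℝ} {M : ℝ}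

theorem abs_coeff_mul_le_of_abs_coeff_le {f g : PowerSeries ℝ} (hM : 0 ≤ M) {s : ℕ}
    (hf : ∀ a, |coeff a f| ≤ M ^ a) (hg : ∀ b, |coeff b g| ≤ ((b : ℝ) + 1) ^ s * M ^ b) (r : ℕ) :
    |coeff r (f * g)| ≤ ((r : ℝ) + 1) ^ (s + 1) * M ^ r := by
  rw [coeff_mul]
  calc |∑ q ∈ antidiagonal r, coeff q.1 f * coeff q.2 g|
      ≤ ∑ q ∈ antidiagonal r, ((r : ℝ) + 1) ^ s * M ^ r := by
        refine (abs_sum_le_sum_abs _ _).trans (sum_le_sum fun q hq => ?_)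
        rw [abs_mul, ← mem_antidiagonal.1 hq, pow_add]
        calc |coeff q.1 f| * |coeff q.2 g| ≤ M ^ q.1 * (((q.2 : ℝ) + 1) ^ s * M ^ q.2) :=
              mul_le_mul (hf _) (hg _) (abs_nonneg _) (by positivity)
          _ ≤ M ^ q.1 * (((r : ℝ) + 1) ^ s * M ^ q.2) := by
              gcongr
              exact Finset.HasAntidiagonal.antidiagonal.snd_le hq
          _ = _ := by rw [mem_antidiagonal.1 hq]; ring
    _ = ((r : ℝ) + 1) ^ (s + 1) * M ^ r := by
        rw [sum_const, Nat.card_antidiagonal, nsmul_eq_mul]; push_cast; ring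

theorem abs_coeff_mul_inv_le (hM : 0 ≤ M) (hA0 : ∀ m, constantCoeff (A m) = 1)
    (hR : ∀ k r, |coeff r (A k * (A (k + 1))⁻¹)| ≤ M ^ r) (s k r : ℕ) :
    |coeff r (A k * (A (k + s))⁻¹)| ≤ ((r : ℝ) + 1) ^ s * M ^ r := by
  induction s generalizing k r with
  | zero =>
    rw [add_zero, PowerSeries.mul_inv_cancel _ (by simp [hA0]), coeff_one, pow_zero, one_mul]
    split_ifs with hr
    · simp [hr]
    · simpa using pow_nonneg hM r
  | succ s ih =>
    have htelescope : A k * (A (k + (s + 1)))⁻¹ =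
        A k * (A (k + 1))⁻¹ * (A (k + 1) * (A (k + 1 + s))⁻¹) := by
      rw [mul_assoc, ← mul_assoc (A (k + 1))⁻¹, PowerSeries.inv_mul_cancel _ (by simp [hA0]),
        one_mul, add_right_comm, add_assoc]
    rw [htelescope]
    exact abs_coeff_mul_le_of_abs_coeff_le hM (hR k) (ih (k + 1)) r

theorem coeff_succ_mul_inv_eq_sum (hA0 : ∀ m, constantCoeff (A m) = 1)
    (hI : ∀ n, A n = A (n + 1) + ∑ k ∈ range (n + 1), C (J n k) * A k * X ^ (n + 1 - k))
    {N n : ℕ} (hN : N ≤ n) :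
    coeff (N + 1) (A n * (A (n + 1))⁻¹) =
      ∑ j ∈ range (N + 1), J n (n - j) * coeff (N - j) (A (n - j) * (A (n + 1))⁻¹) := by
  have hratio : A n * (A (n + 1))⁻¹ =
      1 + ∑ k ∈ range (n + 1), C (J n k) * (A k * (A (n + 1))⁻¹) * X ^ (n + 1 - k) := by
    conv_lhs => rw [hI n]
    rw [add_mul, PowerSeries.mul_inv_cancel _ (by simp [hA0]), sum_mul]
    exact congrArg _ (sum_congr rfl fun k _ => by ring)
  have hterm : ∀ j ∈ range (n + 1),
      coeff (N + 1) (C (J n (n - j)) * (A (n - j) * (A (n + 1))⁻¹) * X ^ (n + 1 - (n - j))) =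
        if j ≤ N then J n (n - j) * coeff (N - j) (A (n - j) * (A (n + 1))⁻¹) else 0 := by
    intro j hj
    rw [show n + 1 - (n - j) = j + 1 by have := mem_range.1 hj; omega, coeff_mul_X_pow',
      coeff_C_mul]
    simp only [add_le_add_iff_right, Nat.add_sub_add_right]
  -- reindex by `j = n - k`: only `j ≤ N` contributes to the coefficient of `X ^ (N + 1)`
  rw [hratio, map_add, coeff_one, if_neg N.succ_ne_zero, zero_add, map_sum,
    ← sum_range_reflect]
  simp only [Nat.add_sub_cancel]
  rw [sum_congr rfl hterm]
  symm
  rw [← sum_subset (range_subset_range.2 (by omega : N + 1 ≤ n + 1))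
    fun j _ hj => if_neg (by simpa using hj)]
  exact sum_congr rfl fun j hj => (if_pos (Nat.lt_succ_iff.1 (mem_range.1 hj))).symm

theorem exists_abs_le_of_reflected_recurrence (hM : 0 ≤ M)
    (hA0 : ∀ m, constantCoeff (A m) = 1)
    (hR : ∀ k r, |coeff r (A k * (A (k + 1))⁻¹)| ≤ M ^ r)
    (hI : ∀ n, A n = A (n + 1) + ∑ k ∈ range (n + 1), C (J n k) * A k * X ^ (n + 1 - k))
    (N : ℕ) : ∃ B : ℝ, ∀ n, N ≤ n → |J n (n - N)| ≤ B := by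
  induction N using Nat.strong_induction_on with
  | _ N ih =>
  choose! B hB using ih
  refine ⟨M ^ (N + 1) + ∑ j ∈ range N, B j * (((N - j : ℕ) : ℝ) + 1) ^ (j + 1) * M ^ (N - j),
    fun n hn => ?_⟩
  have hJ : J n (n - N) = coeff (N + 1) (A n * (A (n + 1))⁻¹) -
      ∑ j ∈ range N, J n (n - j) * coeff (N - j) (A (n - j) * (A (n + 1))⁻¹) := by
    rw [coeff_succ_mul_inv_eq_sum hA0 hI hn, sum_range_succ, Nat.sub_self,
      coeff_zero_eq_constantCoeff_apply, map_mul, constantCoeff_inv, hA0, hA0, inv_one, mul_one]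
    ring
  rw [hJ]
  refine (abs_sub _ _).trans (add_le_add (hR n (N + 1))
    ((abs_sum_le_sum_abs _ _).trans (sum_le_sum fun j hj => ?_)))
  have hjN := mem_range.1 hj
  have hcoeff := abs_coeff_mul_inv_le hM hA0 hR (j + 1) (n - j) (N - j)
  rw [show n - j + (j + 1) = n + 1 by omega] at hcoeff
  rw [abs_mul, mul_assoc]
  exact mul_le_mul (hB j hjN n (by omega)) hcoeff (abs_nonneg _)
    ((abs_nonneg _).trans (hB j hjN j le_rfl))

end PowerSeries

section Interlacing

variable {i : ℕ} {u : Fin i → ℝ} {v : Fin (i + 1) → ℝ}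

theorem nodalWeight_mul_eval_nodal_nonneg (hv : StrictMono v)
    (hint : ∀ k : Fin i, v k.castSucc < u k ∧ u k < v k.succ) (j : Fin (i + 1)) :
    0 ≤ nodalWeight univ v j * (nodal univ u).eval (v j) := by
  have hweight : nodalWeight univ v j = ∏ k : Fin i, (v j - v (j.succAbove k))⁻¹ := by
    rw [nodalWeight, ← compl_singleton, ← Fin.image_succAbove_univ,
      prod_image Fin.succAbove_right_injective.injOn]
  rw [hweight, eval_nodal, ← prod_mul_distrib]
  -- `v (j.succAbove k)` and `u k` lie on the same side of `v j`
  refine prod_nonneg fun k _ => ?_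
  rcases lt_or_ge k.castSucc j with h | h
  · rw [Fin.succAbove_of_castSucc_lt _ _ h]
    have h1 : v k.castSucc < v j := hv h
    have h2 : u k < v j := (hint k).2.trans_le (hv.monotone (Fin.castSucc_lt_iff_succ_le.mp h))
    exact mul_nonneg (inv_nonneg.2 (sub_nonneg.2 h1.le)) (sub_nonneg.2 h2.le)
  · rw [Fin.succAbove_of_le_castSucc _ _ h]
    have h1 : v j < v k.succ := hv (h.trans_lt k.castSucc_lt_succ)
    have h2 : v j < u k := (hv.monotone h).trans_lt (hint k).1
    exact mul_nonneg_of_nonpos_of_nonpos (inv_nonpos.2 (by linarith)) (by linarith)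

theorem abs_coeff_reflect_nodal_mul_inv_le (hv : StrictMono v)
    (hint : ∀ k : Fin i, v k.castSucc < u k ∧ u k < v k.succ) {M : ℝ} (hvM : ∀ j, |v j| ≤ M)
    (r : ℕ) :
    |PowerSeries.coeff r ((reflect i (nodal univ u) : PowerSeries ℝ) *
      (reflect (i + 1) (nodal univ v) : PowerSeries ℝ)⁻¹)| ≤ M ^ r := by
  set w : Fin (i + 1) → ℝ := fun j => nodalWeight univ v j * (nodal univ u).eval (v j)
  have hu : (nodal univ u).natDegree = i := by rw [natDegree_nodal, card_univ, Fintype.card_fin]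
  have hcoeff : ∀ m, PowerSeries.coeff m ((reflect i (nodal univ u) : PowerSeries ℝ) *
      (reflect (i + 1) (nodal univ v) : PowerSeries ℝ)⁻¹) = ∑ j, w j * v j ^ m := by
    intro m
    rw [coe_reflect_mul_inv_reflect_nodal hv.injective.injOn (by simp) hu.le, map_sum]
    simp only [PowerSeries.coeff_C_mul, PowerSeries.coeff_inv_one_sub_C_mul_X, w]
  have hsum : ∑ j, w j = 1 := by
    have h0 := hcoeff 0
    rw [PowerSeries.coeff_zero_eq_constantCoeff_apply, map_mul, PowerSeries.constantCoeff_inv,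
      constantCoeff_coe_reflect_of_monic nodal_monic hu,
      constantCoeff_coe_reflect_of_monic nodal_monic (by simp)] at h0
    simpa using h0.symm
  have hw : ∀ j, 0 ≤ w j := nodalWeight_mul_eval_nodal_nonneg hv hint
  rw [hcoeff r]
  calc |∑ j, w j * v j ^ r| ≤ ∑ j, w j * M ^ r := by
        refine (abs_sum_le_sum_abs _ _).trans (sum_le_sum fun j _ => ?_)
        rw [abs_mul, abs_of_nonneg (hw j), abs_pow]
        exact mul_le_mul_of_nonneg_left (pow_le_pow_left₀ (abs_nonneg _) (hvM j) r) (hw j)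
    _ = M ^ r := by rw [← sum_mul, hsum, one_mul]

end Interlacing

theorem recurrence_coefficients_near_diagonal_bounded_general (a b : ℝ)
    (p : ℕ → Polynomial ℝ) (J : ℕ → ℕ → ℝ) (x : (n : ℕ) → Fin n → ℝ)
    (hrec : ∀ ℓ : ℕ, X * p ℓ = p (ℓ + 1) + ∑ k ∈ Finset.range (ℓ + 1), C (J ℓ k) * p k)
    (hx : ∀ n, StrictMono (x n))
    (hxΔ : ∀ n, ∀ k : Fin n, x n k ∈ Set.Icc a b)
    (hp : ∀ n, p n = ∏ k : Fin n, (X - C (x n k)))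
    (hinter : ∀ n, ∀ k : Fin n, x (n + 1) k.castSucc < x n k ∧ x n k < x (n + 1) k.succ) :
    ∀ N : ℕ, ∃ C : ℝ, ∀ n : ℕ, N ≤ n → |J n (n - N)| ≤ C := by
  have hnodal : ∀ n, p n = nodal univ (x n) := fun n => (hp n).trans (nodal_eq _ _).symm
  have hdeg : ∀ n, (p n).natDegree = n := fun n => by
    rw [hnodal, natDegree_nodal, card_univ, Fintype.card_fin]
  have hxM : ∀ n k, |x n k| ≤ max |a| |b| := fun n k =>
    abs_le_max_abs_abs (hxΔ n k).1 (hxΔ n k).2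
  refine PowerSeries.exists_abs_le_of_reflected_recurrence
    (A := fun n => (reflect n (p n) : PowerSeries ℝ)) ((abs_nonneg a).trans (le_max_left |a| |b|))
    (fun n => constantCoeff_coe_reflect_of_monic (hnodal n ▸ nodal_monic) (hdeg n))
    (fun k r => ?_) (fun n => ?_)
  · rw [hnodal k, hnodal (k + 1)]
    exact abs_coeff_reflect_nodal_mul_inv_le (hx (k + 1)) (hinter k) (hxM (k + 1)) r
  · have h := congrArg coeToPowerSeries.ringHom
      (reflect_of_X_mul_eq_add_sum (fun k => (hdeg k).le) (hrec n))
    simpa only [map_add, map_sum, map_mul, map_pow, coeToPowerSeries.ringHom_apply, coe_C,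
      coe_X] using h

/-- Let `(p n)` be monic real polynomials with `deg p_n = n` satisfying the recurrence
`x p_n = p_{n+1} + ∑_{k=0}^n J_{n,k} p_k`. If each `p n` has exactly `n` simple zeros lying
in a compact interval `Δ = [a,b]` and the zeros of consecutive polynomials interlace, then
for every `N ≥ 0` one has `sup_{n ≥ N} |J_{n,n-N}| < ∞`. -/
theorem recurrence_coefficients_near_diagonal_bounded (a b : ℝ) (hab : a ≤ b)
    (p : ℕ → Polynomial ℝ) (J : ℕ → ℕ → ℝ) (x : (n : ℕ) → Fin n → ℝ)
    (hrec : ∀ ℓ : ℕ, X * p ℓ = p (ℓ + 1) + ∑ k ∈ Finset.range (ℓ + 1), C (J ℓ k) * p k)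
    (hx : ∀ n, StrictMono (x n))
    (hxΔ : ∀ n, ∀ k : Fin n, x n k ∈ Set.Icc a b)
    (hp : ∀ n, p n = ∏ k : Fin n, (X - C (x n k)))
    (hinter : ∀ n, ∀ k : Fin n, x (n + 1) k.castSucc < x n k ∧ x n k < x (n + 1) k.succ) :
    ∀ N : ℕ, ∃ C : ℝ, ∀ n : ℕ, N ≤ n → |J n (n - N)| ≤ C :=
  recurrence_coefficients_near_diagonal_bounded_general a b p J x hrec hx hxΔ hp hinter
end

section
/- In the biorthogonal setting with lower Hessenberg recurrence matrix J, for every k ≥ 0 and x ∈ ℝ: ∫_ℝ K_n(x,y) y^k K_n(y,x) dμ(y) − x^k K_n(x,x) = − Σ_{ℓ=n−k}^{n−1} q_ℓ(x) Σ_{ℓ'=n}^{ℓ+k} [J^k]_{ℓ,ℓ'} p_{ℓ'}(x). In particular the discrepancy only involves p_{ℓ'} with n ≤ ℓ' ≤ n−1+k and q_ℓ with n−k ≤ ℓ ≤ n−1. -/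
open MeasureTheory

/-- The Christoffel--Darboux kernel of biorthogonal sequences. -/
noncomputable def CDkernel (p q : ℕ → ℝ → ℝ) (n : ℕ) (x y : ℝ) : ℝ :=
  ∑ j ∈ Finset.range n, p j x * q j y

lemma matPow_support (J : ℕ → ℕ → ℝ) (hhess : ∀ ℓ k : ℕ, ℓ + 1 < k → J ℓ k = 0) :
    ∀ k i j : ℕ, i + k < j → matPow J k i j = 0 := by
  intro k
  induction k with
  | zero =>
    intro i j h
    simp only [matPow]
    rw [if_neg]; omega
  | succ l ih =>
    intro i j h
    have : (fun m => matPow J l i m * J m j) = fun _ => (0 : ℝ) := by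
      funext m
      by_cases hm : i + l < m
      · rw [ih i m hm, zero_mul]
      · rw [hhess m j (by omega), mul_zero]
    simp only [matPow, this, tsum_zero]

lemma matPow_succ_sum (J : ℕ → ℕ → ℝ) (hhess : ∀ ℓ k : ℕ, ℓ + 1 < k → J ℓ k = 0)
    (l i j : ℕ) :
    matPow J (l + 1) i j = ∑ m ∈ Finset.range (i + l + 1), matPow J l i m * J m j := by
  simp only [matPow]
  exact tsum_eq_sum fun m hm => by
    rw [matPow_support J hhess l i m (by simp at hm; omega), zero_mul]

lemma pow_mul_p (p : ℕ → ℝ → ℝ) (J : ℕ → ℕ → ℝ)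
    (hhess : ∀ ℓ k : ℕ, ℓ + 1 < k → J ℓ k = 0)
    (hrecp : ∀ ℓ : ℕ, ∀ y : ℝ, y * p ℓ y = ∑ k ∈ Finset.range (ℓ + 2), J ℓ k * p k y) :
    ∀ k ℓ : ℕ, ∀ y : ℝ,
      y ^ k * p ℓ y = ∑ m ∈ Finset.range (ℓ + k + 1), matPow J k ℓ m * p m y := by
  intro k
  induction k with
  | zero =>
    intro ℓ y
    simp [matPow]
  | succ l ih =>
    intro ℓ y
    have h1 : y ^ (l + 1) * p ℓ y = y * (y ^ l * p ℓ y) := by ring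
    rw [h1, ih ℓ y, Finset.mul_sum]
    have h2 : ∀ m ∈ Finset.range (ℓ + l + 1),
        y * (matPow J l ℓ m * p m y)
          = ∑ r ∈ Finset.range (ℓ + l + 2), matPow J l ℓ m * (J m r * p r y) := by
      intro m hm
      simp only [Finset.mem_range] at hm
      have : y * (matPow J l ℓ m * p m y) = matPow J l ℓ m * (y * p m y) := by ring
      rw [this, hrecp m y, Finset.mul_sum]
      rw [← Finset.sum_subset (Finset.range_subset_range.2 (by omega : m + 2 ≤ ℓ + l + 2))]
      intro r _ hr
      simp only [Finset.mem_range] at hr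
      rw [hhess m r (by omega), zero_mul, mul_zero]
    rw [Finset.sum_congr rfl h2, Finset.sum_comm]
    refine Finset.sum_congr (by ring_nf) fun r _ => ?_
    rw [matPow_succ_sum J hhess l ℓ r, Finset.sum_mul]
    exact Finset.sum_congr rfl fun m _ => by ring

lemma integral_pow_pq (μ : Measure ℝ) (p q : ℕ → ℝ → ℝ) (J : ℕ → ℕ → ℝ)
    (hbi : ∀ j j' : ℕ, ∫ y, p j y * q j' y ∂μ = if j = j' then (1 : ℝ) else 0)
    (hhess : ∀ ℓ k : ℕ, ℓ + 1 < k → J ℓ k = 0)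
    (hrecp : ∀ ℓ : ℕ, ∀ y : ℝ, y * p ℓ y = ∑ k ∈ Finset.range (ℓ + 2), J ℓ k * p k y)
    (hint : ∀ m j j' : ℕ, Integrable (fun y => y ^ m * (p j y * q j' y)) μ)
    (k a b : ℕ) :
    ∫ y, y ^ k * (p a y * q b y) ∂μ = matPow J k a b := by
  have hfun : (fun y => y ^ k * (p a y * q b y))
      = fun y => ∑ m ∈ Finset.range (a + k + 1), matPow J k a m * (p m y * q b y) := by
    funext y
    have : y ^ k * (p a y * q b y) = (y ^ k * p a y) * q b y := by ring
    rw [this, pow_mul_p p J hhess hrecp k a y, Finset.sum_mul]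
    exact Finset.sum_congr rfl fun m _ => by ring
  have hint' : ∀ m : ℕ, Integrable (fun y => p m y * q b y) μ := by
    intro m
    have := hint 0 m b
    simpa using this
  rw [hfun, integral_finset_sum _ fun m _ => (hint' m).const_mul _]
  have : ∀ m ∈ Finset.range (a + k + 1),
      ∫ y, matPow J k a m * (p m y * q b y) ∂μ
        = matPow J k a m * (if m = b then (1 : ℝ) else 0) := by
    intro m _
    rw [integral_const_mul, hbi m b]
  rw [Finset.sum_congr rfl this]
  simp only [mul_ite, mul_one, mul_zero, Finset.sum_ite_eq', Finset.mem_range]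
  split
  · rfl
  · exact (matPow_support J hhess k a b (by omega)).symm

/-- In the biorthogonal setting with lower Hessenberg recurrence matrix `J`, for every `k ≥ 0`
and `x ∈ ℝ`:
`∫ K_n(x,y) y^k K_n(y,x) dμ(y) − x^k K_n(x,x)
  = − ∑_{ℓ=n−k}^{n−1} q_ℓ(x) ∑_{ℓ'=n}^{ℓ+k} [J^k]_{ℓ,ℓ'} p_{ℓ'}(x)`. -/
theorem CD_moment_discrepancy (μ : Measure ℝ) (p q : ℕ → ℝ → ℝ)
    (J : ℕ → ℕ → ℝ) (N : ℕ → ℕ)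
    (hbi : ∀ j j' : ℕ, ∫ y, p j y * q j' y ∂μ = if j = j' then (1 : ℝ) else 0)
    (hhess : ∀ ℓ k : ℕ, ℓ + 1 < k → J ℓ k = 0)
    (hrecp : ∀ ℓ : ℕ, ∀ y : ℝ, y * p ℓ y = ∑ k ∈ Finset.range (ℓ + 2), J ℓ k * p k y)
    (hrecq : ∀ ℓ : ℕ, ∀ y : ℝ, y * q ℓ y = ∑ k ∈ Finset.range (N ℓ + 1), J k ℓ * q k y)
    (hint : ∀ m j j' : ℕ, Integrable (fun y => y ^ m * (p j y * q j' y)) μ)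
    (n k : ℕ) (x : ℝ) :
    (∫ y, CDkernel p q n x y * y ^ k * CDkernel p q n y x ∂μ) -
        x ^ k * CDkernel p q n x x =
      - ∑ ℓ ∈ Finset.Ico (n - k) n, q ℓ x *
          ∑ ℓ' ∈ Finset.Icc n (ℓ + k), matPow J k ℓ ℓ' * p ℓ' x := by
  -- Step 1: expand the integrand as a finite double sum
  have hexp : ∀ y : ℝ, CDkernel p q n x y * y ^ k * CDkernel p q n y x
      = ∑ j ∈ Finset.range n, ∑ j' ∈ Finset.range n,
          (p j x * q j' x) * (y ^ k * (p j' y * q j y)) := by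
    intro y
    rw [CDkernel, CDkernel, Finset.sum_mul, Finset.sum_mul]
    refine Finset.sum_congr rfl fun j _ => ?_
    rw [Finset.mul_sum]
    exact Finset.sum_congr rfl fun j' _ => by ring
  have hI : (∫ y, CDkernel p q n x y * y ^ k * CDkernel p q n y x ∂μ)
      = ∑ j ∈ Finset.range n, ∑ j' ∈ Finset.range n,
          (p j x * q j' x) * matPow J k j' j := by
    simp only [hexp]
    rw [integral_finset_sum _ fun j _ =>
      integrable_finset_sum _ fun j' _ => (hint k j' j).const_mul _]
    refine Finset.sum_congr rfl fun j _ => ?_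
    rw [integral_finset_sum _ fun j' _ => (hint k j' j).const_mul _]
    refine Finset.sum_congr rfl fun j' _ => ?_
    rw [integral_const_mul, integral_pow_pq μ p q J hbi hhess hrecp hint k j' j]
  have hK : x ^ k * CDkernel p q n x x
      = ∑ j' ∈ Finset.range n, q j' x *
          ∑ m ∈ Finset.range (j' + k + 1), matPow J k j' m * p m x := by
    rw [CDkernel, Finset.mul_sum]
    refine Finset.sum_congr rfl fun j' _ => ?_
    have : x ^ k * (p j' x * q j' x) = (x ^ k * p j' x) * q j' x := by ring
    rw [this, pow_mul_p p J hhess hrecp k j' x]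
    rw [Finset.sum_mul, Finset.mul_sum]
    exact Finset.sum_congr rfl fun m _ => by ring
  rw [hI, hK, Finset.sum_comm, ← Finset.sum_sub_distrib]
  -- per-index computation
  have key : ∀ j' ∈ Finset.range n,
      ((∑ j ∈ Finset.range n, (p j x * q j' x) * matPow J k j' j) -
        q j' x * ∑ m ∈ Finset.range (j' + k + 1), matPow J k j' m * p m x)
      = - (q j' x * ∑ m ∈ Finset.Icc n (j' + k), matPow J k j' m * p m x) := by
    intro j' hj'
    have h1 : (∑ j ∈ Finset.range n, (p j x * q j' x) * matPow J k j' j)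
        = q j' x * ∑ j ∈ Finset.range n, matPow J k j' j * p j x := by
      rw [Finset.mul_sum]
      exact Finset.sum_congr rfl fun j _ => by ring
    rw [h1, ← mul_sub, ← mul_neg]
    congr 1
    rcases le_or_gt n (j' + k + 1) with h | h
    · rw [← Finset.sum_range_add_sum_Ico _ h, ← Finset.Ico_add_one_right_eq_Icc]
      ring
    · rw [← Finset.sum_range_add_sum_Ico _ h.le, Finset.Icc_eq_empty (by omega),
        Finset.sum_empty, neg_zero]
      have hz : ∑ m ∈ Finset.Ico (j' + k + 1) n, matPow J k j' m * p m x = 0 := by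
        refine Finset.sum_eq_zero fun m hm => ?_
        simp only [Finset.mem_Ico] at hm
        rw [matPow_support J hhess k j' m (by omega), zero_mul]
      rw [hz]; ring
  rw [Finset.sum_congr rfl key, ← Finset.sum_neg_distrib]
  refine (Finset.sum_subset ?_ ?_).symm
  · intro j' hj'
    simp only [Finset.mem_Ico] at hj'
    simp only [Finset.mem_range]; omega
  · intro j' hj' hj''
    simp only [Finset.mem_range] at hj'
    simp only [Finset.mem_Ico, not_and, not_lt] at hj''
    rw [Finset.Icc_eq_empty (by omega), Finset.sum_empty, mul_zero, neg_zero]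
end

section
/- Suppose the lower Hessenberg matrix J satisfies sup_{|i−j| ≤ R} |J_{i,j}| < ∞ for every R ≥ 0, that K_n(x,x) > 0 for all large n, and that for every N ≥ 1, q_ℓ(x) p_{ℓ'}(x)/K_n(x,x) → 0 as n → ∞ uniformly for ℓ ∈ [n−N, n) and ℓ' ∈ [n, n+N]. Then for every polynomial f ∈ ℝ[x], (1/K_n(x,x)) ∫_ℝ K_n(x,y) K_n(y,x) f(y) dμ(y) → f(x) as n → ∞. -/
open MeasureTheory Filter

noncomputable def cEnt (J : ℕ → ℕ → ℝ) : ℕ → ℕ → ℕ → ℝ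
  | 0, j, k => if j = k then 1 else 0
  | m+1, j, k => ∑ i ∈ Finset.range (j+2), J j i * cEnt J m i k

lemma cEnt_vanish (J : ℕ → ℕ → ℝ) : ∀ m j k : ℕ, j + m < k → cEnt J m j k = 0 := by
  intro m
  induction m with
  | zero =>
    intro j k h
    simp only [cEnt]
    rw [if_neg]; omega
  | succ m ih =>
    intro j k h
    simp only [cEnt]
    apply Finset.sum_eq_zero
    intro i hi
    rw [Finset.mem_range] at hi
    rw [ih i k (by omega), mul_zero]

lemma cEnt_expand (J : ℕ → ℕ → ℝ) (p : ℕ → ℝ → ℝ)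
    (hrecp : ∀ ℓ : ℕ, ∀ y : ℝ, y * p ℓ y = ∑ k ∈ Finset.range (ℓ + 2), J ℓ k * p k y) :
    ∀ (m j : ℕ) (y : ℝ), y ^ m * p j y = ∑ k ∈ Finset.range (j + m + 1), cEnt J m j k * p k y := by
  intro m
  induction m with
  | zero =>
    intro j y
    simp only [cEnt, pow_zero, one_mul, ite_mul, one_mul, zero_mul]
    rw [Finset.sum_ite_eq]
    simp
  | succ m ih =>
    intro j y
    have h1 : y ^ (m+1) * p j y = y ^ m * (y * p j y) := by ring
    rw [h1, hrecp j y, Finset.mul_sum]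
    have h2 : ∀ i ∈ Finset.range (j+2),
        y ^ m * (J j i * p i y) = J j i * ∑ k ∈ Finset.range (j + m + 2), cEnt J m i k * p k y := by
      intro i hi
      rw [Finset.mem_range] at hi
      have h3 : y ^ m * (J j i * p i y) = J j i * (y ^ m * p i y) := by ring
      rw [h3, ih i y]
      congr 1
      apply Finset.sum_subset
      · intro a ha
        rw [Finset.mem_range] at ha ⊢
        omega
      · intro a ha ha'
        rw [Finset.mem_range] at ha ha'
        rw [cEnt_vanish J m i a (by omega), zero_mul]
    rw [Finset.sum_congr rfl h2]
    simp only [Finset.mul_sum]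
    rw [Finset.sum_comm]
    have h4 : j + (m + 1) + 1 = j + m + 2 := by omega
    rw [h4]
    apply Finset.sum_congr rfl
    intro k hk
    simp only [cEnt, Finset.sum_mul]
    apply Finset.sum_congr rfl
    intro i hi
    ring

lemma cEnt_bound (J : ℕ → ℕ → ℝ)
    (hJ : ∀ R : ℕ, ∃ C : ℝ, ∀ i j : ℕ, i ≤ j + R → j ≤ i + R → |J i j| ≤ C) :
    ∀ m D : ℕ, ∃ B : ℝ, 0 ≤ B ∧ ∀ j k : ℕ, j ≤ k + D → |cEnt J m j k| ≤ B := by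
  intro m
  induction m with
  | zero =>
    intro D
    refine ⟨1, zero_le_one, fun j k _ => ?_⟩
    simp only [cEnt]
    split <;> simp
  | succ m ih =>
    intro D
    obtain ⟨B, hB0, hB⟩ := ih (D + 1)
    obtain ⟨C, hC⟩ := hJ (m + D + 1)
    have hC0 : 0 ≤ C := le_trans (abs_nonneg _) (hC 0 0 (by omega) (by omega))
    refine ⟨(m + D + 2) * (C * B), by positivity, fun j k hjk => ?_⟩
    simp only [cEnt]
    calc |∑ i ∈ Finset.range (j+2), J j i * cEnt J m i k|
        ≤ ∑ i ∈ Finset.range (j+2), |J j i * cEnt J m i k| :=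
          Finset.abs_sum_le_sum_abs _ _
      _ ≤ ∑ i ∈ Finset.range (j+2), (if k ≤ i + m then C * B else 0) := by
          apply Finset.sum_le_sum
          intro i hi
          rw [Finset.mem_range] at hi
          by_cases h : k ≤ i + m
          · rw [if_pos h, abs_mul]
            apply mul_le_mul (hC j i (by omega) (by omega)) (hB i k (by omega))
              (abs_nonneg _) hC0
          · rw [if_neg h, cEnt_vanish J m i k (by omega), mul_zero, abs_zero]
      _ ≤ (m + D + 2) * (C * B) := by
          rw [← Finset.sum_filter]
          rw [Finset.sum_const, nsmul_eq_mul]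
          apply mul_le_mul_of_nonneg_right _ (by positivity)
          have hsub : (Finset.range (j+2)).filter (fun i => k ≤ i + m) ⊆
              Finset.Ico (k - m) (j + 2) := by
            intro i hi
            simp only [Finset.mem_filter, Finset.mem_range] at hi
            rw [Finset.mem_Ico]
            omega
          have hcard := Finset.card_le_card hsub
          rw [Nat.card_Ico] at hcard
          have : ((Finset.range (j+2)).filter (fun i => k ≤ i + m)).card ≤ m + D + 2 := by omega
          exact_mod_cast this


lemma cEnt_integral (μ : Measure ℝ) (J : ℕ → ℕ → ℝ) (p q : ℕ → ℝ → ℝ)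
    (hbi : ∀ j j' : ℕ, ∫ y, p j y * q j' y ∂μ = if j = j' then (1 : ℝ) else 0)
    (hrecp : ∀ ℓ : ℕ, ∀ y : ℝ, y * p ℓ y = ∑ k ∈ Finset.range (ℓ + 2), J ℓ k * p k y)
    (hint : ∀ m j j' : ℕ, Integrable (fun y => y ^ m * (p j y * q j' y)) μ)
    (m j k : ℕ) :
    ∫ y, y ^ m * (p j y * q k y) ∂μ = cEnt J m j k := by
  have hint0 : ∀ i k' : ℕ, Integrable (fun y => p i y * q k' y) μ := by
    intro i k'
    have := hint 0 i k'
    simpa using this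
  have heq : (fun y => y ^ m * (p j y * q k y)) =
      fun y => ∑ i ∈ Finset.range (j + m + 1), cEnt J m j i * (p i y * q k y) := by
    funext y
    rw [show y ^ m * (p j y * q k y) = (y ^ m * p j y) * q k y by ring,
      cEnt_expand J p hrecp m j y, Finset.sum_mul]
    apply Finset.sum_congr rfl
    intro i _
    ring
  rw [heq, integral_finset_sum]
  · have : ∀ i ∈ Finset.range (j + m + 1),
        ∫ y, cEnt J m j i * (p i y * q k y) ∂μ = if i = k then cEnt J m j i else 0 := by
      intro i _
      rw [MeasureTheory.integral_const_mul, hbi i k]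
      split <;> simp
    rw [Finset.sum_congr rfl this, Finset.sum_ite_eq' (Finset.range (j + m + 1)) k]
    split
    · rfl
    · next h =>
      rw [Finset.mem_range] at h
      exact (cEnt_vanish J m j k (by omega)).symm
  · intro i _
    exact (hint0 i k).const_mul _

lemma KK_eq (p q : ℕ → ℝ → ℝ) (n m : ℕ) (x : ℝ) :
    (fun y => CDkernel p q n x y * CDkernel p q n y x * y ^ m) =
      fun y => ∑ j ∈ Finset.range n, ∑ j' ∈ Finset.range n,
        (p j x * q j' x) * (y ^ m * (p j' y * q j y)) := by
  funext y
  simp only [CDkernel, Finset.sum_mul, Finset.mul_sum]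
  rw [Finset.sum_comm]
  apply Finset.sum_congr rfl
  intro j _
  apply Finset.sum_congr rfl
  intro j' _
  ring

lemma KK_int (μ : Measure ℝ) (p q : ℕ → ℝ → ℝ)
    (hint : ∀ m j j' : ℕ, Integrable (fun y => y ^ m * (p j y * q j' y)) μ)
    (n m : ℕ) (x : ℝ) :
    Integrable (fun y => CDkernel p q n x y * CDkernel p q n y x * y ^ m) μ := by
  rw [KK_eq]
  apply integrable_finset_sum
  intro j _
  apply integrable_finset_sum
  intro j' _
  exact (hint m j' j).const_mul _

lemma KK_val (μ : Measure ℝ) (J : ℕ → ℕ → ℝ) (p q : ℕ → ℝ → ℝ)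
    (hbi : ∀ j j' : ℕ, ∫ y, p j y * q j' y ∂μ = if j = j' then (1 : ℝ) else 0)
    (hrecp : ∀ ℓ : ℕ, ∀ y : ℝ, y * p ℓ y = ∑ k ∈ Finset.range (ℓ + 2), J ℓ k * p k y)
    (hint : ∀ m j j' : ℕ, Integrable (fun y => y ^ m * (p j y * q j' y)) μ)
    (n m : ℕ) (x : ℝ) :
    ∫ y, CDkernel p q n x y * CDkernel p q n y x * y ^ m ∂μ =
      ∑ j ∈ Finset.range n, ∑ j' ∈ Finset.range n, (p j x * q j' x) * cEnt J m j' j := by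
  rw [show (fun y => CDkernel p q n x y * CDkernel p q n y x * y ^ m) = _ from KK_eq p q n m x]
  rw [integral_finset_sum]
  · apply Finset.sum_congr rfl
    intro j _
    rw [integral_finset_sum]
    · apply Finset.sum_congr rfl
      intro j' _
      rw [MeasureTheory.integral_const_mul, cEnt_integral μ J p q hbi hrecp hint m j' j]
    · intro j' _
      exact (hint m j' j).const_mul _
  · intro j _
    apply integrable_finset_sum
    intro j' _
    exact (hint m j' j).const_mul _

lemma key_monomial (μ : Measure ℝ) (p q : ℕ → ℝ → ℝ) (J : ℕ → ℕ → ℝ) (x : ℝ)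
    (hbi : ∀ j j' : ℕ, ∫ y, p j y * q j' y ∂μ = if j = j' then (1 : ℝ) else 0)
    (hrecp : ∀ ℓ : ℕ, ∀ y : ℝ, y * p ℓ y = ∑ k ∈ Finset.range (ℓ + 2), J ℓ k * p k y)
    (hint : ∀ m j j' : ℕ, Integrable (fun y => y ^ m * (p j y * q j' y)) μ)
    (hJ : ∀ R : ℕ, ∃ C : ℝ, ∀ i j : ℕ, i ≤ j + R → j ≤ i + R → |J i j| ≤ C)
    (hpos : ∃ n₀ : ℕ, ∀ n : ℕ, n₀ ≤ n → 0 < CDkernel p q n x x)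
    (hratio : ∀ Nb : ℕ, 1 ≤ Nb → ∀ ε : ℝ, 0 < ε → ∃ n₀ : ℕ, ∀ n : ℕ, n₀ ≤ n →
      ∀ ℓ ℓ' : ℕ, n - Nb ≤ ℓ → ℓ < n → n ≤ ℓ' → ℓ' ≤ n + Nb →
        |q ℓ x * p ℓ' x / CDkernel p q n x x| ≤ ε)
    (m : ℕ) :
    Tendsto (fun n : ℕ =>
        (∫ y, CDkernel p q n x y * CDkernel p q n y x * y ^ m ∂μ) / CDkernel p q n x x)
      atTop (nhds (x ^ m)) := by
  obtain ⟨B, hB0, hB⟩ := cEnt_bound J hJ m 0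
  obtain ⟨n₀, hn₀⟩ := hpos
  rw [Metric.tendsto_atTop]
  intro ε hε
  set A : ℝ := (m : ℝ) * (m : ℝ) * B with hA
  have hA0 : 0 ≤ A := by positivity
  set ε' : ℝ := ε / (A + 1) with hε'def
  have hε' : 0 < ε' := by positivity
  obtain ⟨n₁, hn₁⟩ := hratio (m + 1) (by omega) ε' hε'
  refine ⟨max n₀ n₁, fun n hn => ?_⟩
  have hKpos := hn₀ n (le_trans (le_max_left _ _) hn)
  have hKne : CDkernel p q n x x ≠ 0 := ne_of_gt hKpos
  set I : ℝ := ∫ y, CDkernel p q n x y * CDkernel p q n y x * y ^ m ∂μ with hI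
  -- the difference formula
  have hxK : x ^ m * CDkernel p q n x x =
      ∑ j' ∈ Finset.range n, ∑ j ∈ Finset.range (n + m),
        cEnt J m j' j * (q j' x * p j x) := by
    simp only [CDkernel, Finset.mul_sum]
    apply Finset.sum_congr rfl
    intro j' hj'
    rw [Finset.mem_range] at hj'
    rw [show x ^ m * (p j' x * q j' x) = (x ^ m * p j' x) * q j' x by ring,
      cEnt_expand J p hrecp m j' x, Finset.sum_mul]
    rw [Finset.sum_subset (Finset.range_subset_range.2 (by omega : j' + m + 1 ≤ n + m))]
    · apply Finset.sum_congr rfl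
      intro j _
      ring
    · intro j hj hj'
      rw [Finset.mem_range] at hj hj'
      rw [cEnt_vanish J m j' j (by omega), zero_mul, zero_mul]
  have hIval : I = ∑ j' ∈ Finset.range n, ∑ j ∈ Finset.range n,
      cEnt J m j' j * (q j' x * p j x) := by
    rw [hI, KK_val μ J p q hbi hrecp hint n m x, Finset.sum_comm]
    apply Finset.sum_congr rfl
    intro j' _
    apply Finset.sum_congr rfl
    intro j _
    ring
  have hdiff : x ^ m * CDkernel p q n x x - I =
      ∑ j' ∈ Finset.Ico (n - m) n, ∑ j ∈ Finset.Ico n (n + m),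
        cEnt J m j' j * (q j' x * p j x) := by
    rw [hxK, hIval, ← Finset.sum_sub_distrib]
    have hsplit : ∀ j' ∈ Finset.range n,
        (∑ j ∈ Finset.range (n + m), cEnt J m j' j * (q j' x * p j x)) -
          (∑ j ∈ Finset.range n, cEnt J m j' j * (q j' x * p j x)) =
          ∑ j ∈ Finset.Ico n (n + m), cEnt J m j' j * (q j' x * p j x) := by
      intro j' _
      rw [Finset.range_eq_Ico, Finset.range_eq_Ico]
      have h := Finset.sum_Ico_consecutive (fun j => cEnt J m j' j * (q j' x * p j x))
        (Nat.zero_le n) (Nat.le_add_right n m)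
      linarith [h]
    rw [Finset.sum_congr rfl hsplit, Finset.range_eq_Ico]
    have h := Finset.sum_Ico_consecutive
      (fun j' => ∑ j ∈ Finset.Ico n (n + m), cEnt J m j' j * (q j' x * p j x))
      (Nat.zero_le (n - m)) (Nat.sub_le n m)
    rw [← h]
    have hzero : ∑ j' ∈ Finset.Ico 0 (n - m),
        ∑ j ∈ Finset.Ico n (n + m), cEnt J m j' j * (q j' x * p j x) = 0 := by
      apply Finset.sum_eq_zero
      intro j' hj'
      rw [Finset.mem_Ico] at hj'
      apply Finset.sum_eq_zero
      intro j hj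
      rw [Finset.mem_Ico] at hj
      rw [cEnt_vanish J m j' j (by omega), zero_mul]
    rw [hzero, zero_add]
  -- the ratio bound
  rw [Real.dist_eq]
  have hfrac : I / CDkernel p q n x x - x ^ m =
      -(∑ j' ∈ Finset.Ico (n - m) n, ∑ j ∈ Finset.Ico n (n + m),
        cEnt J m j' j * (q j' x * p j x / CDkernel p q n x x)) := by
    have h1 : ∑ j' ∈ Finset.Ico (n - m) n, ∑ j ∈ Finset.Ico n (n + m),
        cEnt J m j' j * (q j' x * p j x / CDkernel p q n x x) =
        (x ^ m * CDkernel p q n x x - I) / CDkernel p q n x x := by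
      rw [hdiff, Finset.sum_div]
      apply Finset.sum_congr rfl
      intro j' _
      rw [Finset.sum_div]
      apply Finset.sum_congr rfl
      intro j _
      ring
    rw [h1]
    field_simp
    ring
  rw [hfrac, abs_neg]
  have hlt : A * ε' < ε := by
    rw [hε'def, mul_div_assoc']
    rw [div_lt_iff₀ (by positivity)]
    nlinarith
  refine lt_of_le_of_lt ?_ hlt
  calc |∑ j' ∈ Finset.Ico (n - m) n, ∑ j ∈ Finset.Ico n (n + m),
      cEnt J m j' j * (q j' x * p j x / CDkernel p q n x x)|
      ≤ ∑ j' ∈ Finset.Ico (n - m) n, ∑ j ∈ Finset.Ico n (n + m),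
        |cEnt J m j' j * (q j' x * p j x / CDkernel p q n x x)| := by
        refine le_trans (Finset.abs_sum_le_sum_abs _ _) ?_
        exact Finset.sum_le_sum fun j' _ => Finset.abs_sum_le_sum_abs _ _
    _ ≤ ∑ j' ∈ Finset.Ico (n - m) n, ∑ j ∈ Finset.Ico n (n + m), B * ε' := by
        apply Finset.sum_le_sum
        intro j' hj'
        apply Finset.sum_le_sum
        intro j hj
        rw [Finset.mem_Ico] at hj' hj
        rw [abs_mul]
        refine mul_le_mul (hB j' j (by omega)) ?_ (abs_nonneg _) hB0
        exact hn₁ n (le_trans (le_max_right _ _) hn) j' j (by omega) hj'.2 hj.1 (by omega)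
    _ ≤ A * ε' := by
        simp only [Finset.sum_const, Nat.card_Ico, smul_smul, nsmul_eq_mul]
        have hc1 : n + m - n = m := by omega
        have hc2 : n - (n - m) ≤ m := by omega
        rw [hc1]
        have h4 : ((n - (n - m) : ℕ) : ℝ) ≤ (m : ℝ) := by exact_mod_cast hc2
        have h5 : (0:ℝ) ≤ (m:ℝ) * (B * ε') := by positivity
        calc ((n - (n - m) : ℕ) : ℝ) * ((m:ℝ) * (B * ε'))
            ≤ (m:ℝ) * ((m:ℝ) * (B * ε')) := mul_le_mul_of_nonneg_right h4 h5
          _ = A * ε' := by rw [hA]; ring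


/-- Nevai condition for polynomials: assume (a) near-diagonal boundedness of the lower
Hessenberg recurrence matrix `J`, (b) `K_n(x,x) > 0` for large `n`, and (c) for every
`N ≥ 1`, `q_ℓ(x) p_{ℓ'}(x) / K_n(x,x) → 0` for `ℓ ∈ [n−N, n)` and `ℓ' ∈ [n, n+N]`. Then for
every polynomial `f`, `(1/K_n(x,x)) ∫ K_n(x,y) K_n(y,x) f(y) dμ(y) → f(x)`. -/
theorem nevai_condition_for_polynomials (μ : Measure ℝ) (p q : ℕ → ℝ → ℝ)
    (J : ℕ → ℕ → ℝ) (N : ℕ → ℕ) (x : ℝ)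
    (hbi : ∀ j j' : ℕ, ∫ y, p j y * q j' y ∂μ = if j = j' then (1 : ℝ) else 0)
    (hhess : ∀ ℓ k : ℕ, ℓ + 1 < k → J ℓ k = 0)
    (hrecp : ∀ ℓ : ℕ, ∀ y : ℝ, y * p ℓ y = ∑ k ∈ Finset.range (ℓ + 2), J ℓ k * p k y)
    (hrecq : ∀ ℓ : ℕ, ∀ y : ℝ, y * q ℓ y = ∑ k ∈ Finset.range (N ℓ + 1), J k ℓ * q k y)
    (hint : ∀ m j j' : ℕ, Integrable (fun y => y ^ m * (p j y * q j' y)) μ)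
    (hJ : ∀ R : ℕ, ∃ C : ℝ, ∀ i j : ℕ, i ≤ j + R → j ≤ i + R → |J i j| ≤ C)
    (hpos : ∃ n₀ : ℕ, ∀ n : ℕ, n₀ ≤ n → 0 < CDkernel p q n x x)
    (hratio : ∀ Nb : ℕ, 1 ≤ Nb → ∀ ε : ℝ, 0 < ε → ∃ n₀ : ℕ, ∀ n : ℕ, n₀ ≤ n →
      ∀ ℓ ℓ' : ℕ, n - Nb ≤ ℓ → ℓ < n → n ≤ ℓ' → ℓ' ≤ n + Nb →
        |q ℓ x * p ℓ' x / CDkernel p q n x x| ≤ ε) :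
    ∀ f : Polynomial ℝ,
      Tendsto (fun n : ℕ =>
          (∫ y, CDkernel p q n x y * CDkernel p q n y x * f.eval y ∂μ) /
            CDkernel p q n x x)
        atTop (nhds (f.eval x)) := by
  intro f
  have key := fun m => key_monomial μ p q J x hbi hrecp hint hJ hpos hratio m
  set d := f.natDegree with hd
  have heval : ∀ y : ℝ, f.eval y = ∑ m ∈ Finset.range (d + 1), f.coeff m * y ^ m := by
    intro y
    exact Polynomial.eval_eq_sum_range (p := f) y
  have hKKf : ∀ n : ℕ, (∫ y, CDkernel p q n x y * CDkernel p q n y x * f.eval y ∂μ) =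
      ∑ m ∈ Finset.range (d + 1),
        f.coeff m * ∫ y, CDkernel p q n x y * CDkernel p q n y x * y ^ m ∂μ := by
    intro n
    have heq2 : (fun y => CDkernel p q n x y * CDkernel p q n y x * f.eval y) =
        fun y => ∑ m ∈ Finset.range (d + 1),
          f.coeff m * (CDkernel p q n x y * CDkernel p q n y x * y ^ m) := by
      funext y
      rw [heval y, Finset.mul_sum]
      apply Finset.sum_congr rfl
      intro m _
      ring
    rw [heq2, integral_finset_sum]
    · apply Finset.sum_congr rfl
      intro m _
      rw [MeasureTheory.integral_const_mul]
    · intro m _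
      exact (KK_int μ p q hint n m x).const_mul _
  have hfx : f.eval x = ∑ m ∈ Finset.range (d + 1), f.coeff m * x ^ m := heval x
  rw [hfx]
  have heqfun : (fun n : ℕ =>
      (∫ y, CDkernel p q n x y * CDkernel p q n y x * f.eval y ∂μ) / CDkernel p q n x x) =
      fun n => ∑ m ∈ Finset.range (d + 1), f.coeff m *
        ((∫ y, CDkernel p q n x y * CDkernel p q n y x * y ^ m ∂μ) / CDkernel p q n x x) := by
    funext n
    rw [hKKf n, Finset.sum_div]
    apply Finset.sum_congr rfl
    intro m _
    rw [mul_div_assoc]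
  rw [heqfun]
  exact tendsto_finset_sum _ fun m _ => (key m).const_mul _
end

section
/- Let x be an isolated point of supp(μ) and suppose the Nevai condition holds at x: for every bounded continuous f, (1/K_n(x,x)) ∫ K_n(x,y) K_n(y,x) f(y) dμ(y) → f(x), where K_n(x,x) ≠ 0 for large n. Then lim_{n→∞} K_n(x,x) = 1/μ({x}). -/
open MeasureTheory Filter

/-!
Test the Nevai condition against a bump function `φ` with `φ x = 1` supported in the isolated
neighbourhood of `x`. Only the atom at `x` sees `φ`, so the Nevai quotient equals
`K_n(x,x)² μ({x}) / K_n(x,x) = K_n(x,x) μ({x})`, which therefore tends to `1`.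
-/

theorem integral_eq_measureReal_singleton_smul {α E : Type*} [MeasurableSpace α]
    [MeasurableSingletonClass α] [NormedAddCommGroup E] [NormedSpace ℝ E] [CompleteSpace E]
    (μ : Measure α) {s : Set α} {x : α} (hs : μ (s \ {x}) = 0) {g : α → E}
    (hg : ∀ y ∉ s, g y = 0) :
    ∫ y, g y ∂μ = μ.real {x} • g x := by
  have hae : g =ᵐ[μ] Set.indicator {x} (fun _ => g x) := by
    filter_upwards [compl_mem_ae_iff.mpr hs] with y hy
    by_cases hyx : y = x
    · simp [hyx]
    · have hys : y ∉ s := fun h => hy ⟨h, hyx⟩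
      simp [hg y hys, hyx]
  rw [integral_congr_ae hae, integral_indicator_const _ (measurableSet_singleton x)]

theorem ContDiffBump.eq_zero_of_notMem_Icc {x : ℝ} (φ : ContDiffBump x) {y : ℝ}
    (hy : y ∉ Set.Icc (x - φ.rOut) (x + φ.rOut)) : φ y = 0 := by
  refine Function.notMem_support.mp fun h => hy ?_
  rw [φ.support_eq, Real.ball_eq_Ioo] at h
  exact Set.Ioo_subset_Icc_self h

/-- Let `x` be an isolated point of `supp(μ)` (i.e. `μ({x}) > 0` and some punctured interval
`[x−ε, x+ε] \ {x}` is `μ`-null). If the Nevai condition holds at `x`, i.e.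
`(1/K_n(x,x)) ∫ K_n(x,y) K_n(y,x) f(y) dμ(y) → f(x)` for every bounded continuous `f`, and
`K_n(x,x) ≠ 0` for large `n`, then `K_n(x,x) → 1/μ({x})`. -/
theorem CD_diagonal_limit_at_isolated_point (μ : Measure ℝ) [IsFiniteMeasure μ]
    (p q : ℕ → ℝ → ℝ) (x : ℝ)
    (hatom : 0 < μ {x})
    (hisolated : ∃ ε : ℝ, 0 < ε ∧ μ (Set.Icc (x - ε) (x + ε) \ {x}) = 0)
    (hne : ∃ n₀ : ℕ, ∀ n : ℕ, n₀ ≤ n → CDkernel p q n x x ≠ 0)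
    (hnevai : ∀ f : ℝ → ℝ, Continuous f → (∃ C : ℝ, ∀ y : ℝ, |f y| ≤ C) →
      Tendsto (fun n : ℕ =>
          (∫ y, CDkernel p q n x y * CDkernel p q n y x * f y ∂μ) / CDkernel p q n x x)
        atTop (nhds (f x))) :
    Tendsto (fun n : ℕ => CDkernel p q n x x) atTop (nhds (1 / (μ {x}).toReal)) := by
  obtain ⟨ε, hε, hnull⟩ := hisolated
  obtain ⟨n₀, hn₀⟩ := hne
  have hm : (μ {x}).toReal ≠ 0 := (ENNReal.toReal_pos hatom.ne' (measure_ne_top μ _)).ne'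
  let φ : ContDiffBump x := ⟨ε / 2, ε, half_pos hε, half_lt_self hε⟩
  have hφx : φ x = 1 := φ.one_of_mem_closedBall (Metric.mem_closedBall_self (half_pos hε).le)
  have hφ_bdd : ∃ C : ℝ, ∀ y : ℝ, |φ y| ≤ C :=
    ⟨1, fun y => abs_le.mpr ⟨by linarith [φ.nonneg (x := y)], φ.le_one⟩⟩
  have hquot : ∀ n ≥ n₀,
      (∫ y, CDkernel p q n x y * CDkernel p q n y x * φ y ∂μ) / CDkernel p q n x x
        = CDkernel p q n x x * (μ {x}).toReal := by
    intro n hn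
    rw [integral_eq_measureReal_singleton_smul μ hnull
      fun y hy => by simp [φ.eq_zero_of_notMem_Icc hy], hφx, smul_eq_mul, Measure.real]
    field_simp [hn₀ n hn]
  have hlim : Tendsto (fun n => CDkernel p q n x x * (μ {x}).toReal) atTop (nhds 1) := by
    simpa [hφx] using
      (hnevai φ φ.continuous hφ_bdd).congr' (eventually_atTop.mpr ⟨n₀, hquot⟩)
  simpa [hm] using hlim.div_const (μ {x}).toReal
end

section
/- Let (p_n) be monic polynomials with deg p_n = n satisfying x p_ℓ = Σ_{k=0}^{ℓ+1} J_{ℓ,k} p_k (J lower Hessenberg with superdiagonal 1), and let (q_n) ⊂ L²(μ) be biorthogonal to (p_n). Assume sup_{n ≥ N} |J_{n,n−N}| < ∞ for every N ≥ 0. Define ν_n = (1/n) Σ_{zeros y of p_n, with multiplicity} δ_y and dη_n(x) = (1/n) K_n(x,x) dμ(x). Then for every ℓ ≥ 0 there is a constant c (depending on ℓ and J) such that |∫ x^ℓ dν_n − ∫ x^ℓ dη_n| ≤ c/n for all n; in particular the difference of moments tends to 0. -/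
/-!
Let `T_n` be the matrix of multiplication by `X` on `ℝ[X]/(p_n)` in the basis `p_0, …, p_{n-1}`
(the transpose of the truncation `J_n`). In a Newton basis `∏_{i<k} (X - y_i)` built from the
zeros of `p_n` the same map is triangular with the zeros on the diagonal, so `∑ y^ℓ = tr T_n^ℓ`.
By biorthogonality `∫ x^ℓ K_n(x,x) dμ` is the sum over `j < n` of the coefficient of `p_j` in
`X^ℓ p_j`, and this coefficient is `(T_n^ℓ)_{jj}` as soon as `j + ℓ ≤ n`. Products of banded
matrices with bounded diagonals are again banded with bounded diagonals, with bounds independent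
of the size, so the at most `ℓ` remaining diagonal terms are bounded uniformly in `n`.
-/

open MeasureTheory Polynomial

lemma Multiset.exists_eq_map_range {α : Type*} [Nonempty α] (s : Multiset α) :
    ∃ r : ℕ → α, s = (Finset.range (Multiset.card s)).val.map r := by
  refine ⟨fun i => s.toList.getD i (Classical.arbitrary α), ?_⟩
  conv_lhs => rw [← Multiset.coe_toList s]
  rw [Finset.range_val, ← Multiset.length_toList, Multiset.range, Multiset.map_coe]
  congr 1
  apply List.ext_getElem <;> simp +contextual

lemma Fin.abs_sum_le_mul_of_eq_zero {n ℓ : ℕ} {f : Fin n → ℝ} {B : ℝ} (hB : 0 ≤ B)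
    (hf : ∀ i, |f i| ≤ B) (hzero : ∀ i : Fin n, (i : ℕ) + ℓ ≤ n → f i = 0) :
    |∑ i, f i| ≤ ℓ * B := by
  set tail := Finset.univ.filter fun i : Fin n => n < i + ℓ
  have hsum : ∑ i, f i = ∑ i ∈ tail, f i :=
    (Finset.sum_filter_of_ne fun i _ hi => not_le.mp fun h => hi (hzero i h)).symm
  have hcard : tail.card ≤ ℓ := by
    calc tail.card ≤ (Finset.Ico (n - ℓ) n).card := by
          refine Finset.card_le_card_of_injOn Fin.val (fun i hi => ?_) Fin.val_injective.injOn
          simp only [tail, Finset.coe_filter, Finset.mem_univ, true_and, Set.mem_ofPred_eq] at hi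
          simp only [Finset.coe_Ico, Set.mem_Ico]
          omega
      _ ≤ ℓ := by simp; omega
  calc |∑ i, f i| ≤ ∑ i ∈ tail, |f i| := hsum ▸ Finset.abs_sum_le_sum_abs _ _
    _ ≤ tail.card • B := Finset.sum_le_card_nsmul _ _ _ fun i _ => hf i
    _ ≤ ℓ * B := by rw [nsmul_eq_mul]; gcongr

lemma Matrix.IsLowerTriangular.pow_apply_self {m R : Type*} [LinearOrder m] [Fintype m]
    [DecidableEq m] [Semiring R] {M : Matrix m m R} (hM : M.IsLowerTriangular) (ℓ : ℕ) (i : m) :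
    (M ^ ℓ) i i = M i i ^ ℓ := by
  induction ℓ with
  | zero => simp
  | succ ℓ ih =>
    rw [pow_succ, pow_succ, Matrix.mul_apply, ← ih]
    refine Finset.sum_eq_single i (fun k _ hki => ?_) (by simp)
    rcases hki.lt_or_gt with hki | hik
    · rw [hM hki, mul_zero]
    · rw [hM.pow ℓ hik, zero_mul]

namespace Polynomial.Sequence

variable {K : Type*} [Field K] (S : Sequence K)

lemma isUnit_leadingCoeff (i : ℕ) : IsUnit (S i).leadingCoeff :=
  (leadingCoeff_ne_zero.mpr (S.ne_zero i)).isUnit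

@[simp]
lemma basis_repr_self (i : ℕ) :
    (S.basis S.isUnit_leadingCoeff).repr (S i) = Finsupp.single i 1 := by
  rw [← S.basis_eq_self S.isUnit_leadingCoeff, Module.Basis.repr_self]

lemma linearIndependent_mk (n : ℕ) :
    LinearIndependent K fun i : Fin n => AdjoinRoot.mk (S n) (S i) := by
  rw [Fintype.linearIndependent_iff]
  intro g hg
  have hsum : ∑ i : Fin n, g i • S i = 0 := by
    refine eq_zero_of_dvd_of_degree_lt (p := S n) (AdjoinRoot.mk_eq_zero.mp ?_) ?_
    · simpa [map_sum, AdjoinRoot.smul_mk] using hg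
    · rw [S.degree_eq n, ← mem_degreeLT]
      exact Submodule.sum_mem _ fun i _ => Submodule.smul_mem _ _
        (mem_degreeLT.mpr (by rw [S.degree_eq]; exact_mod_cast i.isLt))
  exact Fintype.linearIndependent_iff.mp (S.linearIndependent.comp _ Fin.val_injective) g hsum

noncomputable def adjoinRootBasis (n : ℕ) : Module.Basis (Fin n) K (AdjoinRoot (S n)) :=
  haveI := (AdjoinRoot.powerBasis (S.ne_zero n)).finite
  basisOfLinearIndependentOfCardEqFinrank' _ (S.linearIndependent_mk n) <| by
    rw [Fintype.card_fin, (AdjoinRoot.powerBasis (S.ne_zero n)).finrank,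
      AdjoinRoot.powerBasis_dim, S.natDegree_eq]

@[simp]
lemma adjoinRootBasis_apply (n : ℕ) (i : Fin n) :
    S.adjoinRootBasis n i = AdjoinRoot.mk (S n) (S i) := by
  simp [adjoinRootBasis]

lemma adjoinRootBasis_repr_mk {n : ℕ} {g : K[X]} (hg : g ∈ degreeLT K (n + 1)) (i : Fin n) :
    (S.adjoinRootBasis n).repr (AdjoinRoot.mk (S n) g) i
      = (S.basis S.isUnit_leadingCoeff).repr g i := by
  -- `n + 1`, not `n`: `S n` is sent to `0`, matching its zero coefficient at `i < n`.
  rw [← S.span_degreeLT fun j _ => S.isUnit_leadingCoeff j] at hg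
  induction hg using Submodule.span_induction with
  | mem g hg =>
    obtain ⟨j, hj, rfl⟩ := hg
    rcases Nat.lt_succ_iff_lt_or_eq.mp (Set.mem_Iio.mp hj) with hjn | rfl
    · have := (S.adjoinRootBasis n).repr_self ⟨j, hjn⟩
      simp only [adjoinRootBasis_apply] at this
      simp [this, Finsupp.single_apply, Fin.ext_iff]
    · simp [i.isLt.ne']
  | zero => simp
  | add g h _ _ hg hh => simp [hg, hh]
  | smul a g _ hg => simp [← AdjoinRoot.smul_mk, hg]

noncomputable def mulXMatrix (n : ℕ) : Matrix (Fin n) (Fin n) K :=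
  Algebra.leftMulMatrix (S.adjoinRootBasis n) (AdjoinRoot.root (S n))

lemma mulXMatrix_pow_apply {n ℓ : ℕ} (i j : Fin n) (hj : (j : ℕ) + ℓ ≤ n) :
    (S.mulXMatrix n ^ ℓ) i j = (S.basis S.isUnit_leadingCoeff).repr (X ^ ℓ * S j) i := by
  have hdeg : X ^ ℓ * S j ∈ degreeLT K (n + 1) := by
    rw [mem_degreeLT, degree_mul, degree_X_pow, S.degree_eq]
    exact_mod_cast (by omega : ℓ + (j : ℕ) < n + 1)
  rw [mulXMatrix, ← map_pow, Algebra.leftMulMatrix_eq_repr_mul, adjoinRootBasis_apply,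
    ← AdjoinRoot.mk_X, ← map_pow, ← map_mul, S.adjoinRootBasis_repr_mk hdeg]

lemma trace_mulXMatrix_pow (n ℓ : ℕ) :
    (S.mulXMatrix n ^ ℓ).trace
      = Algebra.trace K (AdjoinRoot (S n)) (AdjoinRoot.root (S n) ^ ℓ) := by
  rw [mulXMatrix, ← map_pow, Algebra.trace_eq_matrix_trace (S.adjoinRootBasis n)]

lemma basis_repr_X_mul {S : Sequence K} {J : ℕ → ℕ → K}
    (hrec : ∀ ℓ : ℕ, X * S ℓ = S (ℓ + 1) + ∑ k ∈ Finset.range (ℓ + 1), C (J ℓ k) * S k)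
    (i j : ℕ) :
    (S.basis S.isUnit_leadingCoeff).repr (X * S j) i
      = (if i = j + 1 then 1 else 0) + if i ≤ j then J j i else 0 := by
  simp [hrec, ← smul_eq_C_mul, Finsupp.single_apply, eq_comm]

end Polynomial.Sequence

namespace Polynomial

variable {K : Type*} [Field K]

noncomputable def newtonSequence (r : ℕ → K) : Sequence K where
  elems' k := ∏ i ∈ Finset.range k, (X - C (r i))
  degree_eq' k := by simp [degree_prod]

lemma newtonSequence_apply (r : ℕ → K) (k : ℕ) :
    newtonSequence r k = ∏ i ∈ Finset.range k, (X - C (r i)) := rfl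

lemma X_mul_newtonSequence (r : ℕ → K) (k : ℕ) :
    X * newtonSequence r k = newtonSequence r (k + 1) + r k • newtonSequence r k := by
  rw [newtonSequence_apply, newtonSequence_apply, Finset.prod_range_succ, smul_eq_C_mul]
  ring

lemma trace_root_pow_newtonSequence (r : ℕ → K) (n ℓ : ℕ) :
    Algebra.trace K (AdjoinRoot (newtonSequence r n)) (AdjoinRoot.root _ ^ ℓ)
      = ∑ i ∈ Finset.range n, r i ^ ℓ := by
  have hentry : ∀ i j : Fin n, (newtonSequence r).mulXMatrix n i j
      = (if (i : ℕ) = j + 1 then 1 else 0) + if i = j then r j else 0 := by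
    intro i j
    rw [← pow_one ((newtonSequence r).mulXMatrix n), Sequence.mulXMatrix_pow_apply _ i j j.isLt,
      pow_one, X_mul_newtonSequence, map_add, map_smul]
    simp [Finsupp.single_apply, Fin.ext_iff, eq_comm]
  have hlower : ((newtonSequence r).mulXMatrix n).IsLowerTriangular := by
    intro i j hij
    rw [hentry]
    have hij : (i : ℕ) < j := hij
    simp [Fin.ext_iff, hij.ne, show (i : ℕ) ≠ j + 1 by omega]
  rw [← Sequence.trace_mulXMatrix_pow, Matrix.trace, ← Fin.sum_univ_eq_sum_range]
  simp [hlower.pow_apply_self, hentry]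

end Polynomial

namespace AdjoinRoot

lemma trace_root_pow {K : Type*} [Field K] {f : K[X]} (hf : f.Monic)
    (hroots : Multiset.card f.roots = f.natDegree) (ℓ : ℕ) :
    Algebra.trace K (AdjoinRoot f) (root f ^ ℓ) = (f.roots.map (· ^ ℓ)).sum := by
  obtain ⟨r, hr⟩ := Multiset.exists_eq_map_range f.roots
  have hnewton : newtonSequence r f.natDegree = f := by
    conv_rhs => rw [← prod_multiset_X_sub_C_of_monic_of_roots_card_eq hf hroots, hr, hroots]
    rw [newtonSequence_apply, Finset.prod_eq_multiset_prod, Multiset.map_map]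
    rfl
  have := trace_root_pow_newtonSequence r f.natDegree ℓ
  rw [hnewton] at this
  rw [this, hr, hroots, Multiset.map_map]
  rfl

end AdjoinRoot

namespace Matrix

def BandBounded {n : ℕ} (A : Matrix (Fin n) (Fin n) ℝ) (w : ℕ) (C : ℕ → ℝ) : Prop :=
  (∀ i j : Fin n, (j : ℕ) + w < i → A i j = 0) ∧
    ∀ d (i j : Fin n), (j : ℕ) ≤ i + d → |A i j| ≤ C d

variable {n w₁ w₂ : ℕ} {C₁ C₂ : ℕ → ℝ} {A B : Matrix (Fin n) (Fin n) ℝ}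

lemma BandBounded.le_of_mul_ne_zero (hA : A.BandBounded w₁ C₁) (hB : B.BandBounded w₂ C₂)
    {i j k : Fin n} (hne : A i k * B k j ≠ 0) : (i : ℕ) ≤ k + w₁ ∧ (k : ℕ) ≤ j + w₂ := by
  by_contra! h
  by_cases hik : (i : ℕ) ≤ k + w₁
  · exact hne (by rw [hB.1 k j (h hik), mul_zero])
  · exact hne (by rw [hA.1 i k (by omega), zero_mul])

lemma BandBounded.mul (hA : A.BandBounded w₁ C₁) (hB : B.BandBounded w₂ C₂) (hC₁ : 0 ≤ C₁)
    (hC₂ : 0 ≤ C₂) :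
    (A * B).BandBounded (w₁ + w₂)
      fun d => ((d + w₁ + w₂ + 1 : ℕ) : ℝ) * (C₁ (d + w₂) * C₂ (d + w₁)) := by
  constructor
  · intro i j hij
    rw [mul_apply]
    refine Finset.sum_eq_zero fun k _ => not_not.mp fun hne => ?_
    have := hA.le_of_mul_ne_zero hB hne
    omega
  · intro d i j hij
    set window := Finset.univ.filter fun k : Fin n => (i : ℕ) ≤ k + w₁ ∧ (k : ℕ) ≤ j + w₂
    have hcard : window.card ≤ d + w₁ + w₂ + 1 := by
      calc window.card ≤ (Finset.Icc ((i : ℕ) - w₁) (j + w₂)).card := by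
            refine Finset.card_le_card_of_injOn Fin.val (fun k hk => ?_) Fin.val_injective.injOn
            simp only [window, Finset.coe_filter, Set.mem_ofPred_eq, Finset.mem_univ,
              true_and] at hk
            simp only [Finset.coe_Icc, Set.mem_Icc]
            omega
        _ ≤ d + w₁ + w₂ + 1 := by simp only [Nat.card_Icc]; omega
    have hbound : ∀ k, |A i k * B k j|
        ≤ if k ∈ window then C₁ (d + w₂) * C₂ (d + w₁) else 0 := by
      intro k
      split_ifs with hk
      · simp only [window, Finset.mem_filter, Finset.mem_univ, true_and] at hk
        rw [abs_mul]
        exact mul_le_mul (hA.2 _ i k (by omega)) (hB.2 _ k j (by omega)) (abs_nonneg _) (hC₁ _)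
      · by_cases hne : A i k * B k j = 0
        · simp [hne]
        · exact absurd (by simpa [window] using hA.le_of_mul_ne_zero hB hne) hk
    calc |(A * B) i j| ≤ ∑ k, |A i k * B k j| := by
          rw [mul_apply]; exact Finset.abs_sum_le_sum_abs _ _
      _ ≤ ∑ k, if k ∈ window then C₁ (d + w₂) * C₂ (d + w₁) else 0 :=
          Finset.sum_le_sum fun k _ => hbound k
      _ = window.card * (C₁ (d + w₂) * C₂ (d + w₁)) := by
          rw [Finset.sum_ite_mem, Finset.univ_inter, Finset.sum_const, nsmul_eq_mul]
      _ ≤ ((d + w₁ + w₂ + 1 : ℕ) : ℝ) * (C₁ (d + w₂) * C₂ (d + w₁)) := by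
          gcongr
          exact mul_nonneg (hC₁ _) (hC₂ _)

lemma exists_bandBounded_pow (w : ℕ) (C : ℕ → ℝ) (hC : 0 ≤ C) (ℓ : ℕ) :
    ∃ C' : ℕ → ℝ, 0 ≤ C' ∧ ∀ n (A : Matrix (Fin n) (Fin n) ℝ),
      A.BandBounded w C → (A ^ ℓ).BandBounded (ℓ * w) C' := by
  induction ℓ with
  | zero =>
    refine ⟨1, zero_le_one, fun n A _ => ⟨fun i j hij => ?_, fun d i j _ => ?_⟩⟩
    · rw [pow_zero, one_apply_ne (Fin.ne_of_gt (by omega))]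
    · rw [pow_zero, one_apply]
      split_ifs <;> simp
  | succ ℓ ih =>
    obtain ⟨C', hC', hpow⟩ := ih
    refine ⟨fun d => ((d + ℓ * w + w + 1 : ℕ) : ℝ) * (C' (d + w) * C (d + ℓ * w)),
      fun d => mul_nonneg (Nat.cast_nonneg _) (mul_nonneg (hC' _) (hC _)), fun n A hA => ?_⟩
    rw [pow_succ, Nat.succ_mul]
    exact (hpow n A hA).mul hA hC' hC

end Matrix

namespace Polynomial.Sequence

variable {S : Sequence ℝ} {J : ℕ → ℕ → ℝ}

lemma exists_bandBounded_mulXMatrix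
    (hrec : ∀ ℓ : ℕ, X * S ℓ = S (ℓ + 1) + ∑ k ∈ Finset.range (ℓ + 1), C (J ℓ k) * S k)
    (hJ : ∀ N : ℕ, ∃ C : ℝ, ∀ n : ℕ, N ≤ n → |J n (n - N)| ≤ C) :
    ∃ C : ℕ → ℝ, 0 ≤ C ∧ ∀ n, (S.mulXMatrix n).BandBounded 1 C := by
  choose F hF using hJ
  have hentry : ∀ n (i j : Fin n), S.mulXMatrix n i j
      = (if (i : ℕ) = j + 1 then 1 else 0) + if (i : ℕ) ≤ j then J j i else 0 := by
    intro n i j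
    rw [← pow_one (S.mulXMatrix n), S.mulXMatrix_pow_apply i j j.isLt, pow_one,
      basis_repr_X_mul hrec]
  refine ⟨fun d => 1 + ∑ m ∈ Finset.range (d + 1), |F m|, fun d => by positivity,
    fun n => ⟨fun i j hij => ?_, fun d i j hij => ?_⟩⟩
  · rw [hentry, if_neg (by omega), if_neg (by omega), add_zero]
  · have hsum_nonneg : 0 ≤ ∑ m ∈ Finset.range (d + 1), |F m| := by positivity
    rw [hentry]
    refine (abs_add_le _ _).trans (add_le_add ?_ ?_)
    · split_ifs <;> simp
    · split_ifs with hij'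
      · have hJji : |J j i| ≤ |F (j - i)| := by
          simpa [Nat.sub_sub_self hij'] using (hF (j - i) j (by omega)).trans (le_abs_self _)
        exact hJji.trans (Finset.single_le_sum (f := fun m => |F m|) (fun m _ => abs_nonneg _)
          (Finset.mem_range.mpr (by omega)))
      · simpa using hsum_nonneg

lemma exists_abs_mulXMatrix_pow_apply_self_le
    (hrec : ∀ ℓ : ℕ, X * S ℓ = S (ℓ + 1) + ∑ k ∈ Finset.range (ℓ + 1), C (J ℓ k) * S k)
    (hJ : ∀ N : ℕ, ∃ C : ℝ, ∀ n : ℕ, N ≤ n → |J n (n - N)| ≤ C) (ℓ : ℕ) :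
    ∃ B, 0 ≤ B ∧ ∀ n (i : Fin n), |(S.mulXMatrix n ^ ℓ) i i| ≤ B := by
  obtain ⟨C, hC0, hC⟩ := exists_bandBounded_mulXMatrix hrec hJ
  obtain ⟨C', hC'0, hpow⟩ := Matrix.exists_bandBounded_pow 1 C hC0 ℓ
  exact ⟨C' 0, hC'0 0, fun n i => (hpow n _ (hC n)).2 0 i i le_self_add⟩

lemma abs_basis_repr_X_pow_mul_self_le {ℓ : ℕ} {B : ℝ}
    (hB : ∀ n (i : Fin n), |(S.mulXMatrix n ^ ℓ) i i| ≤ B) (j : ℕ) :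
    |(S.basis S.isUnit_leadingCoeff).repr (X ^ ℓ * S j) j| ≤ B := by
  have := hB (j + ℓ + 1) ⟨j, by omega⟩
  rwa [S.mulXMatrix_pow_apply _ _ (by simp)] at this

end Polynomial.Sequence

namespace MeasureTheory

variable {μ : Measure ℝ}

lemma integrable_eval_mul {q : ℝ → ℝ} (hq : ∀ m, Integrable (fun y => y ^ m * q y) μ)
    (g : ℝ[X]) : Integrable (fun y => g.eval y * q y) μ := by
  induction g using Polynomial.induction_on' with
  | add g h hg hh =>
    simp only [eval_add, add_mul]
    exact hg.add hh
  | monomial m a => simpa [mul_assoc] using (hq m).const_mul a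

lemma integral_eval_mul_eq_basis_repr (S : Polynomial.Sequence ℝ) {q : ℝ → ℝ} {k : ℕ}
    (hq : ∀ m, Integrable (fun y => y ^ m * q y) μ)
    (hbi : ∀ j, ∫ y, (S j).eval y * q y ∂μ = if j = k then 1 else 0) (g : ℝ[X]) :
    ∫ y, g.eval y * q y ∂μ = (S.basis S.isUnit_leadingCoeff).repr g k := by
  let L : ℝ[X] →ₗ[ℝ] ℝ :=
    { toFun g := ∫ y, g.eval y * q y ∂μ
      map_add' g h := by
        simp only [eval_add, add_mul]
        exact integral_add (integrable_eval_mul hq g) (integrable_eval_mul hq h)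
      map_smul' a g := by simp [mul_assoc, integral_const_mul] }
  change L g = (S.basis S.isUnit_leadingCoeff).coord k g
  congr 1
  refine (S.basis S.isUnit_leadingCoeff).ext fun j => ?_
  simp [L, hbi, Finsupp.single_apply]

lemma integral_pow_mul_sum_eval_mul (S : Polynomial.Sequence ℝ) {q : ℕ → ℝ → ℝ}
    (hq : ∀ k m, Integrable (fun y => y ^ m * q k y) μ)
    (hbi : ∀ j k, ∫ y, (S j).eval y * q k y ∂μ = if j = k then 1 else 0) (ℓ n : ℕ) :
    ∫ y, y ^ ℓ * ∑ j ∈ Finset.range n, (S j).eval y * q j y ∂μ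
      = ∑ j ∈ Finset.range n, (S.basis S.isUnit_leadingCoeff).repr (X ^ ℓ * S j) j := by
  have hterm : ∀ j, ∫ y, y ^ ℓ * ((S j).eval y * q j y) ∂μ
      = (S.basis S.isUnit_leadingCoeff).repr (X ^ ℓ * S j) j := by
    intro j
    rw [← integral_eval_mul_eq_basis_repr S (hq j) (fun i => hbi i j)]
    simp [mul_assoc]
  simp_rw [Finset.mul_sum]
  rw [integral_finsetSum _ fun j _ => ?_]
  · exact Finset.sum_congr rfl fun j _ => hterm j
  · convert integrable_eval_mul (hq j) (X ^ ℓ * S j) using 2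
    simp [mul_assoc]

end MeasureTheory

/-- Let `(p n)` be monic real polynomials with `deg p_n = n`, all of whose zeros are real,
satisfying `x p_ℓ = ∑_{k≤ℓ+1} J_{ℓ,k} p_k` with the lower Hessenberg matrix `J` (superdiagonal
`1`) bounded near the diagonal, and let `(q n) ⊂ L²(μ)` be biorthogonal to `(p n)`. With
`ν_n = (1/n) ∑_{zeros of p_n} δ_y` and `dη_n = (1/n) K_n(x,x) dμ`, for every `ℓ ≥ 0` there is
a constant `c` with `|∫ x^ℓ dν_n − ∫ x^ℓ dη_n| ≤ c/n` for all `n ≥ 1`; in particular the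
difference of moments tends to `0`. -/
theorem moments_zero_counting_vs_CD (μ : Measure ℝ) (p : ℕ → Polynomial ℝ)
    (q : ℕ → ℝ → ℝ) (J : ℕ → ℕ → ℝ)
    (hmonic : ∀ n, (p n).Monic) (hdeg : ∀ n, (p n).natDegree = n)
    (hroots : ∀ n, Multiset.card (p n).roots = n)
    (hrec : ∀ ℓ : ℕ, X * p ℓ = p (ℓ + 1) + ∑ k ∈ Finset.range (ℓ + 1), C (J ℓ k) * p k)
    (hJ : ∀ N : ℕ, ∃ C : ℝ, ∀ n : ℕ, N ≤ n → |J n (n - N)| ≤ C)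
    (hbi : ∀ j k : ℕ, ∫ y, (p j).eval y * q k y ∂μ = if j = k then (1 : ℝ) else 0)
    (hint : ∀ m j k : ℕ, Integrable (fun y => y ^ m * ((p j).eval y * q k y)) μ)
    (ℓ : ℕ) :
    ∃ c : ℝ, ∀ n : ℕ, 1 ≤ n →
      |(1 / (n : ℝ)) * (((p n).roots.map (fun r => r ^ ℓ)).sum) -
          (1 / (n : ℝ)) * ∫ y, y ^ ℓ * ∑ j ∈ Finset.range n, (p j).eval y * q j y ∂μ|
        ≤ c / n := by
  let S : Sequence ℝ := ⟨p, fun n => by rw [degree_eq_natDegree (hmonic n).ne_zero, hdeg]⟩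
  have hp₀ : p 0 = 1 := eq_one_of_monic_natDegree_zero (hmonic 0) (hdeg 0)
  have hq : ∀ k m, Integrable (fun y => y ^ m * q k y) μ := fun k m => by
    simpa [hp₀] using hint m 0 k
  obtain ⟨B, hB₀, hB⟩ := S.exists_abs_mulXMatrix_pow_apply_self_le hrec hJ ℓ
  refine ⟨ℓ * (2 * B), fun n _ => ?_⟩
  have hroots_sum : ((p n).roots.map (· ^ ℓ)).sum = ∑ i : Fin n, (S.mulXMatrix n ^ ℓ) i i := by
    rw [← AdjoinRoot.trace_root_pow (hmonic n) (by rw [hroots, hdeg]), ← S.trace_mulXMatrix_pow]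
    rfl
  have hintegral : ∫ y, y ^ ℓ * ∑ j ∈ Finset.range n, (p j).eval y * q j y ∂μ
      = ∑ i : Fin n, (S.basis S.isUnit_leadingCoeff).repr (X ^ ℓ * S i) i := by
    rw [Fin.sum_univ_eq_sum_range (fun j => (S.basis _).repr (X ^ ℓ * S j) j)]
    exact integral_pow_mul_sum_eval_mul S hq hbi ℓ n
  have hdiff := Fin.abs_sum_le_mul_of_eq_zero (ℓ := ℓ) (by positivity : 0 ≤ 2 * B)
    (f := fun i : Fin n => (S.mulXMatrix n ^ ℓ) i i - (S.basis _).repr (X ^ ℓ * S i) i)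
    (fun i => (abs_sub _ _).trans (by linarith [hB n i, S.abs_basis_repr_X_pow_mul_self_le hB i]))
    (fun i hi => sub_eq_zero.mpr (S.mulXMatrix_pow_apply i i hi))
  rw [hroots_sum, hintegral, ← mul_sub, ← Finset.sum_sub_distrib, abs_mul,
    abs_of_nonneg (by positivity), one_div_mul_eq_div]
  exact div_le_div_of_nonneg_right hdiff n.cast_nonneg
end
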